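/- arXiv:0712.1074 — 8 statements merged into one kernel-verified Lean document; each statement's English description precedes it below -/
import Mathlib

section
/- Let k ≥ 2 be an integer and let Λ ⊆ F_2^n belong to the family 𝚲(2k). Then for every integer p with 2 ≤ p ≤ k one has T_p(Λ) ≤ p^p |Λ|^p. -/
open Finset

/-- `T_k(A)`: the number of `2k`-tuples `(a_1,…,a_k,a'_1,…,a'_k) ∈ A^{2k}` with
`a_1+⋯+a_k = a'_1+⋯+a'_k`. -/
def addEnergy {G : Type*} [AddCommGroup G] [DecidableEq G] (k : ℕ) (A : Finset G) : ℕ :=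
  (((Fintype.piFinset fun _ : Fin k => A) ×ˢ (Fintype.piFinset fun _ : Fin k => A)).filter
    fun v => ∑ i, v.1 i = ∑ i, v.2 i).card

/-- `Λ` belongs to the family `𝚲(m)`: no nonempty subset of `Λ` of size at most `m`
has zero sum. -/
def InLambdaFamily {G : Type*} [AddCommGroup G] (m : ℕ) (Λ : Finset G) : Prop :=
  ∀ S ⊆ Λ, S.Nonempty → S.card ≤ m → ∑ x ∈ S, x ≠ 0

/-!
In an elementary abelian `2`-group the sum of a tuple is the sum of the values it takes an odd
number of times. Concatenating the two sides of `a_1 + ⋯ + a_p = a'_1 + ⋯ + a'_p` gives a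
`2p`-tuple with zero sum; its odd-multiplicity values form a zero-sum subset of `Λ` of size at
most `2p`, which `𝚲(2p)` forces to be empty. So every value occurs an even number of times, and
such `2p`-tuples are counted by matching the last entry with an earlier equal one: there are at
most `1 · 3 ⋯ (2p - 1) · |Λ|^p` of them. Finally `(2i + 1)(2(p - 1 - i) + 1) ≤ p²` (AM-GM)
gives `1 · 3 ⋯ (2p - 1) ≤ p^p`.
-/

namespace Fin

variable {α : Type*} [DecidableEq α] {m : ℕ}

theorem card_filter_snoc_eq (u : Fin m → α) (a b : α) :
    #{i | (snoc u a : Fin (m + 1) → α) i = b} = #{i | u i = b} + if a = b then 1 else 0 := by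
  simp only [card_filter, sum_univ_castSucc, snoc_castSucc, snoc_last]

theorem card_filter_insertNth_eq (j : Fin (m + 1)) (u : Fin m → α) (a b : α) :
    #{i | (insertNth j a u : Fin (m + 1) → α) i = b} =
      #{i | u i = b} + if a = b then 1 else 0 := by
  simp only [card_filter, sum_univ_succAbove _ j, insertNth_apply_same,
    insertNth_apply_succAbove, add_comm]

end Fin

theorem nsmul_eq_ite_even {G : Type*} [AddMonoid G] (hG : ∀ x : G, x + x = 0) (n : ℕ) (x : G) :
    n • x = if Even n then 0 else x := by
  obtain ⟨r, rfl | rfl⟩ := Nat.even_or_odd' n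
  · simp [mul_nsmul', two_nsmul, hG]
  · simp [succ_nsmul, mul_nsmul', hG, Nat.not_even_bit1]

theorem prod_range_two_mul_add_one_le_pow_self (q : ℕ) : ∏ i ∈ range q, (2 * i + 1) ≤ q ^ q := by
  have hpair : ∀ i ∈ range q, (2 * i + 1) * (2 * (q - 1 - i) + 1) ≤ q ^ 2 := by
    intro i hi
    obtain ⟨j, rfl⟩ : ∃ j, q = i + j + 1 := ⟨q - 1 - i, by simp at hi; omega⟩
    rw [show i + j + 1 - 1 - i = j by omega]
    nlinarith [sq_nonneg ((i : ℤ) - j)]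
  have hsq : (∏ i ∈ range q, (2 * i + 1)) ^ 2 ≤ (q ^ q) ^ 2 :=
    calc (∏ i ∈ range q, (2 * i + 1)) ^ 2
        = ∏ i ∈ range q, (2 * i + 1) * (2 * (q - 1 - i) + 1) := by
          rw [sq, prod_mul_distrib, prod_range_reflect (fun i => 2 * i + 1)]
      _ ≤ ∏ _i ∈ range q, q ^ 2 := prod_le_prod (fun _ _ => Nat.zero_le _) hpair
      _ = (q ^ q) ^ 2 := by rw [prod_const, card_range, ← pow_mul, ← pow_mul, mul_comm]
  exact (pow_le_pow_iff_left₀ (Nat.zero_le _) (Nat.zero_le _) two_ne_zero).mp hsq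

section EvenTuples

variable {α : Type*} [DecidableEq α]

def evenTuples (A : Finset α) (m : ℕ) : Finset (Fin m → α) :=
  {w ∈ Fintype.piFinset fun _ => A | ∀ a ∈ A, Even #{i | w i = a}}

theorem mem_evenTuples {A : Finset α} {m : ℕ} {w : Fin m → α} :
    w ∈ evenTuples A m ↔ (∀ i, w i ∈ A) ∧ ∀ a ∈ A, Even #{i | w i = a} := by
  simp [evenTuples]

theorem snoc_insertNth_mem_evenTuples_iff {A : Finset α} {m : ℕ} (j : Fin (m + 1)) (a : α)
    (u : Fin m → α) :
    Fin.snoc (Fin.insertNth j a u) a ∈ evenTuples A (m + 2) ↔ a ∈ A ∧ u ∈ evenTuples A m := by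
  have hentries : (∀ i, (Fin.snoc (Fin.insertNth j a u) a : Fin (m + 2) → α) i ∈ A) ↔
      a ∈ A ∧ ∀ i, u i ∈ A := by
    rw [Fin.forall_fin_succ', j.forall_iff_succAbove]
    simp only [Fin.snoc_castSucc, Fin.snoc_last, Fin.insertNth_apply_same,
      Fin.insertNth_apply_succAbove]
    tauto
  have hcount (b : α) : Even #{i | (Fin.snoc (Fin.insertNth j a u) a : Fin (m + 2) → α) i = b} ↔
      Even #{i | u i = b} := by
    rw [Fin.card_filter_snoc_eq, Fin.card_filter_insertNth_eq, add_assoc]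
    split_ifs <;> simp [Nat.even_add]
  simp only [mem_evenTuples, hentries, hcount]
  tauto

theorem evenTuples_add_two_subset (A : Finset α) (m : ℕ) :
    evenTuples A (m + 2) ⊆ (univ ×ˢ A ×ˢ evenTuples A m).image
      fun x => Fin.snoc (Fin.insertNth x.1 x.2.1 x.2.2) x.2.1 := by
  intro w hw
  set a := w (Fin.last _)
  have hodd : Even (#{i | Fin.init w i = a} + 1) := by
    have := Fin.card_filter_snoc_eq (Fin.init w) a a
    rw [Fin.snoc_init_self, if_pos rfl] at this
    exact this ▸ (mem_evenTuples.mp hw).2 a ((mem_evenTuples.mp hw).1 _)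
  obtain ⟨j, hj⟩ : ∃ j, Fin.init w j = a := by
    have hne : #{i | Fin.init w i = a} ≠ 0 := fun h => by simp [h] at hodd
    obtain ⟨j, hj⟩ := card_pos.mp (Nat.pos_of_ne_zero hne)
    exact ⟨j, (mem_filter.mp hj).2⟩
  have hw' : Fin.snoc (Fin.insertNth j a (j.removeNth (Fin.init w))) a = w := by
    rw [← hj, Fin.insertNth_self_removeNth, hj, Fin.snoc_init_self]
  rw [← hw', snoc_insertNth_mem_evenTuples_iff] at hw
  exact mem_image.mpr ⟨(j, a, _), mem_product.mpr ⟨mem_univ j, mem_product.mpr hw⟩, hw'⟩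

theorem card_evenTuples_add_two_le (A : Finset α) (m : ℕ) :
    #(evenTuples A (m + 2)) ≤ (m + 1) * #A * #(evenTuples A m) :=
  (card_le_card (evenTuples_add_two_subset A m)).trans <|
    card_image_le.trans (by simp [card_product, mul_assoc])

theorem card_evenTuples_two_mul_le (A : Finset α) (q : ℕ) :
    #(evenTuples A (2 * q)) ≤ (∏ i ∈ range q, (2 * i + 1)) * #A ^ q := by
  induction q with
  | zero => simpa using card_le_one_of_subsingleton _
  | succ q ih =>
    calc #(evenTuples A (2 * (q + 1)))
        ≤ (2 * q + 1) * #A * #(evenTuples A (2 * q)) := card_evenTuples_add_two_le A (2 * q)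
      _ ≤ (2 * q + 1) * #A * ((∏ i ∈ range q, (2 * i + 1)) * #A ^ q) := by gcongr
      _ = (∏ i ∈ range (q + 1), (2 * i + 1)) * #A ^ (q + 1) := by
        rw [prod_range_succ]; ring

end EvenTuples

theorem InLambdaFamily.mono {G : Type*} [AddCommGroup G] {m m' : ℕ} {Λ : Finset G}
    (hΛ : InLambdaFamily m' Λ) (h : m ≤ m') : InLambdaFamily m Λ :=
  fun S hS hne hcard => hΛ S hS hne (hcard.trans h)

section ExponentTwo

variable {G : Type*} [AddCommGroup G] [DecidableEq G]

theorem even_card_filter_eq_of_sum_eq_zero (hG : ∀ x : G, x + x = 0) {m : ℕ} {Λ : Finset G}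
    (hΛ : InLambdaFamily m Λ) {w : Fin m → G} (hwΛ : ∀ i, w i ∈ Λ) (hw : ∑ i, w i = 0)
    (a : G) : Even #{i | w i = a} := by
  set S := {b ∈ univ.image w | ¬Even #{i | w i = b}}
  have hS : ∑ b ∈ S, b = 0 :=
    calc ∑ b ∈ S, b = ∑ b ∈ univ.image w, #{i | w i = b} • b := by
          rw [sum_filter]
          exact sum_congr rfl fun b _ => by rw [nsmul_eq_ite_even hG]; split_ifs <;> rfl
      _ = ∑ i, w i := (sum_comp id w).symm
      _ = 0 := hw
  by_contra hodd
  have haS : a ∈ S := by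
    have hne : #{i | w i = a} ≠ 0 := fun h => hodd (h ▸ Even.zero)
    obtain ⟨i, hi⟩ := card_pos.mp (Nat.pos_of_ne_zero hne)
    exact mem_filter.mpr ⟨mem_image.mpr ⟨i, mem_univ i, (mem_filter.mp hi).2⟩, hodd⟩
  refine hΛ S (fun b hb => ?_) ⟨a, haS⟩ ?_ hS
  · obtain ⟨i, -, rfl⟩ := mem_image.mp (mem_filter.mp hb).1
    exact hwΛ i
  · calc #S ≤ #(univ.image w) := card_filter_le _ _
      _ ≤ m := card_image_le.trans (by simp)

theorem addEnergy_le_card_evenTuples (hG : ∀ x : G, x + x = 0) {p : ℕ} {Λ : Finset G}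
    (hΛ : InLambdaFamily (p + p) Λ) : addEnergy p Λ ≤ #(evenTuples Λ (p + p)) := by
  refine card_le_card_of_injOn (fun v => Fin.append v.1 v.2) (fun v hv => ?_)
    (Fin.appendEquiv p p).injective.injOn
  simp only [coe_filter, Set.mem_ofPred_eq, mem_product, Fintype.mem_piFinset] at hv
  obtain ⟨⟨hv₁, hv₂⟩, hsum⟩ := hv
  have hwΛ : ∀ i, Fin.append v.1 v.2 i ∈ Λ :=
    Fin.addCases (fun i => (Fin.append_left _ _ i).symm ▸ hv₁ i)
      (fun i => (Fin.append_right _ _ i).symm ▸ hv₂ i)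
  refine mem_evenTuples.mpr ⟨hwΛ, fun a _ => even_card_filter_eq_of_sum_eq_zero hG hΛ hwΛ ?_ a⟩
  simp only [Fin.sum_univ_add, Fin.append_left, Fin.append_right, hsum]
  exact hG _

end ExponentTwo

theorem stmt2_general {n : ℕ} (k : ℕ) (Λ : Finset (Fin n → ZMod 2))
    (hΛ : InLambdaFamily (2 * k) Λ) :
    ∀ p : ℕ, 2 ≤ p → p ≤ k → addEnergy p Λ ≤ p ^ p * Λ.card ^ p := by
  intro p _ hpk
  have hG (x : Fin n → ZMod 2) : x + x = 0 := funext fun i => CharTwo.add_self_eq_zero (x i)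
  calc addEnergy p Λ ≤ #(evenTuples Λ (p + p)) :=
        addEnergy_le_card_evenTuples hG (hΛ.mono (by omega))
    _ = #(evenTuples Λ (2 * p)) := by rw [two_mul]
    _ ≤ (∏ i ∈ range p, (2 * i + 1)) * #Λ ^ p := card_evenTuples_two_mul_le Λ p
    _ ≤ p ^ p * #Λ ^ p := Nat.mul_le_mul_right _ (prod_range_two_mul_add_one_le_pow_self p)

theorem stmt2 {n : ℕ} (k : ℕ) (hk : 2 ≤ k) (Λ : Finset (Fin n → ZMod 2))
    (hΛ : InLambdaFamily (2 * k) Λ) :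
    ∀ p : ℕ, 2 ≤ p → p ≤ k → addEnergy p Λ ≤ p ^ p * Λ.card ^ p :=
  stmt2_general k Λ hΛ
end

section
/- Let k and d be positive integers, let Λ ⊆ F_2^n belong to the family 𝚲(2d), let Λ₁ ⊆ Λ be arbitrary, and set Q = d·̇Λ₁ ⊆ d·̇Λ. Then for all k ≤ |Λ₁|/(2d) and every integer p with 2 ≤ p ≤ k one has T_p(Q) ≥ 2^{−3pd} p^{pd} |Q|^p. -/
open Finset

def dDot {G : Type*} [AddCommGroup G] [DecidableEq G] (d : ℕ) (Λ : Finset G) : Finset G :=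
  (Λ.powersetCard d).image fun S => ∑ x ∈ S, x

private lemma add_self_z2 {n : ℕ} (v : Fin n → ZMod 2) : v + v = 0 := by
  funext i
  show v i + v i = 0
  have h : v i + v i = 2 * v i := by ring
  rw [h, show (2 : ZMod 2) = 0 from rfl, zero_mul]

private lemma pow_self_le_nat (p : ℕ) : p ^ p ≤ 4 ^ p * p.factorial := by
  have h1 : p ^ p ≤ (2 * p).descFactorial p := by
    rw [Nat.descFactorial_eq_prod_range]
    calc p ^ p = ∏ _i ∈ Finset.range p, p := by rw [Finset.prod_const, Finset.card_range]
      _ ≤ ∏ i ∈ Finset.range p, (2 * p - i) := by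
          apply Finset.prod_le_prod'
          intro i hi
          rw [Finset.mem_range] at hi
          omega
  have h2 : (2 * p).descFactorial p = p.factorial * (2 * p).choose p :=
    Nat.descFactorial_eq_factorial_mul_choose _ _
  have h3 : (2 * p).choose p ≤ 4 ^ p := by
    calc (2 * p).choose p ≤ ∑ i ∈ Finset.range (2 * p + 1), (2 * p).choose i :=
          Finset.single_le_sum (fun i _ => Nat.zero_le _) (by rw [Finset.mem_range]; omega)
      _ = 2 ^ (2 * p) := Nat.sum_range_choose _
      _ = 4 ^ p := by rw [pow_mul]; norm_num
  calc p ^ p ≤ p.factorial * (2 * p).choose p := h2 ▸ h1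
    _ ≤ p.factorial * 4 ^ p := Nat.mul_le_mul_left _ h3
    _ = 4 ^ p * p.factorial := Nat.mul_comm _ _

private lemma sum_inj_blocks {n d : ℕ} {Λ Λ₁ : Finset (Fin n → ZMod 2)}
    (hΛ : InLambdaFamily (2 * d) Λ) (hΛ₁ : Λ₁ ⊆ Λ)
    {S T : Finset (Fin n → ZMod 2)} (hS : S ∈ Λ₁.powersetCard d)
    (hT : T ∈ Λ₁.powersetCard d) (h : ∑ x ∈ S, x = ∑ x ∈ T, x) : S = T := by
  rw [Finset.mem_powersetCard] at hS hT
  by_contra hne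
  set U := (S ∪ T) \ (S ∩ T) with hU
  have hUsub : U ⊆ Λ :=
    (Finset.sdiff_subset).trans ((Finset.union_subset hS.1 hT.1).trans hΛ₁)
  have hUne : U.Nonempty := by
    rw [Finset.sdiff_nonempty]
    intro hsub
    apply hne
    have h1 : S ⊆ T := fun x hx => (Finset.mem_inter.mp (hsub (Finset.mem_union_left _ hx))).2
    have h2 : T ⊆ S := fun x hx => (Finset.mem_inter.mp (hsub (Finset.mem_union_right _ hx))).1
    exact Finset.Subset.antisymm h1 h2
  have hUcard : U.card ≤ 2 * d := by
    calc U.card ≤ (S ∪ T).card := Finset.card_le_card Finset.sdiff_subset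
      _ ≤ S.card + T.card := Finset.card_union_le _ _
      _ ≤ 2 * d := by rw [hS.2, hT.2]; omega
  have hsum : ∑ x ∈ U, x = 0 := by
    have h1 : ∑ x ∈ U, x = ∑ x ∈ S ∪ T, x - ∑ x ∈ S ∩ T, x :=
      Finset.sum_sdiff_eq_sub Finset.inter_subset_union
    have h2 : ∑ x ∈ S ∪ T, x + ∑ x ∈ S ∩ T, x = ∑ x ∈ S, x + ∑ x ∈ T, x :=
      Finset.sum_union_inter
    have h3 := add_self_z2 (∑ x ∈ S, x)
    have h4 := add_self_z2 (∑ x ∈ S ∩ T, x)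
    rw [h1]
    rw [← h] at h2
    linear_combination (norm := abel) h2 - h4 + h3
  exact hΛ U hUsub hUne hUcard hsum

private lemma grid_count {G : Type*} [DecidableEq G] {p d : ℕ} (B : Fin p → Finset G)
    (hB : ∀ i, (B i).card = d) :
    ((Fintype.piFinset fun ij : Fin p × Fin d => B ij.1).filter Function.Injective).card
      ≤ d.factorial ^ p := by
  classical
  set s := (Fintype.piFinset fun ij : Fin p × Fin d => B ij.1).filter Function.Injective with hs
  rw [← Fintype.card_coe s]
  have key : Fintype.card {a // a ∈ s} ≤ Fintype.card (∀ i : Fin p, Fin d ↪ (B i)) := by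
    apply Fintype.card_le_of_injective
      (fun a => fun i =>
        ⟨fun j => ⟨a.1 (i, j), by
            have := (Finset.mem_filter.mp a.2).1
            exact Fintype.mem_piFinset.mp this (i, j)⟩,
          by
            intro j j' hjj
            have hinj := (Finset.mem_filter.mp a.2).2
            have : ((i, j) : Fin p × Fin d) = (i, j') := hinj (congrArg Subtype.val hjj)
            exact (Prod.ext_iff.mp this).2⟩)
    intro a b hab
    apply Subtype.ext
    funext ij
    obtain ⟨i, j⟩ := ij
    have h1 := congrFun hab i
    have h2 := DFunLike.congr_fun h1 j
    exact congrArg Subtype.val h2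
  refine key.trans ?_
  rw [Fintype.card_pi]
  have hcard : ∀ i : Fin p, Fintype.card (Fin d ↪ (B i)) = d.factorial := by
    intro i
    rw [Fintype.card_embedding_eq, Fintype.card_coe, hB i, Fintype.card_fin,
      Nat.descFactorial_self]
  calc ∏ i : Fin p, Fintype.card (Fin d ↪ (B i)) = ∏ _i : Fin p, d.factorial :=
        Finset.prod_congr rfl (fun i _ => hcard i)
    _ = d.factorial ^ p := by rw [Finset.prod_const, Finset.card_univ, Fintype.card_fin]
    _ ≤ d.factorial ^ p := le_rfl

theorem stmt4 {n : ℕ} (k d : ℕ) (hk : 1 ≤ k) (hd : 1 ≤ d)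
    (Λ : Finset (Fin n → ZMod 2)) (hΛ : InLambdaFamily (2 * d) Λ)
    (Λ₁ : Finset (Fin n → ZMod 2)) (hΛ₁ : Λ₁ ⊆ Λ)
    (Q : Finset (Fin n → ZMod 2)) (hQ : Q = dDot d Λ₁)
    (hkcard : (k : ℝ) ≤ (Λ₁.card : ℝ) / (2 * d)) :
    ∀ p : ℕ, 2 ≤ p → p ≤ k →
      ((2 : ℝ) ^ (3 * p * d))⁻¹ * (p : ℝ) ^ (p * d) * (Q.card : ℝ) ^ p ≤
        (addEnergy p Q : ℝ) := by
  classical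
  intro p hp2 hpk
  set L := Λ₁.card with hLdef
  -- L ≥ 2dp
  have hL : 2 * d * p ≤ L := by
    have h1 : (p : ℝ) ≤ (k : ℝ) := by exact_mod_cast hpk
    have h2 : (0 : ℝ) < 2 * d := by positivity
    have h3 : (p : ℝ) * (2 * d) ≤ (L : ℝ) := by
      rw [← le_div_iff₀ h2]
      exact h1.trans hkcard
    have h4 : ((2 * d * p : ℕ) : ℝ) ≤ (L : ℝ) := by push_cast; nlinarith
    exact_mod_cast h4
  -- the block helper
  have hblock : ∀ b : Fin d → (Fin n → ZMod 2), Function.Injective b → (∀ j, b j ∈ Λ₁) →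
      Finset.univ.image b ∈ Λ₁.powersetCard d ∧
        ∑ x ∈ Finset.univ.image b, x = ∑ j, b j := by
    intro b hbinj hbmem
    constructor
    · rw [Finset.mem_powersetCard]
      constructor
      · intro x hx
        rcases Finset.mem_image.mp hx with ⟨j, _, rfl⟩
        exact hbmem j
      · rw [Finset.card_image_of_injective _ hbinj, Finset.card_univ, Fintype.card_fin]
    · exact Finset.sum_image (fun x _ y _ hxy => hbinj hxy)
  -- the big pair set
  set I : Finset ((Fin p × Fin d) → (Fin n → ZMod 2)) :=
    (Fintype.piFinset fun _ => Λ₁).filter Function.Injective with hI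
  set Pe : Finset (((Fin p × Fin d) → (Fin n → ZMod 2)) × (Fin d → Equiv.Perm (Fin p))) :=
    I ×ˢ Finset.univ with hPe
  set Φ : (((Fin p × Fin d) → (Fin n → ZMod 2)) × (Fin d → Equiv.Perm (Fin p))) →
      ((Fin p → (Fin n → ZMod 2)) × (Fin p → (Fin n → ZMod 2))) :=
    fun x => (fun i => ∑ j, x.1 (i, j), fun i => ∑ j, x.1 (x.2 j i, j)) with hΦ
  have hIa : ∀ a : (Fin p × Fin d) → (Fin n → ZMod 2), a ∈ I →
      (∀ ij, a ij ∈ Λ₁) ∧ Function.Injective a := by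
    intro a ha
    rw [hI, Finset.mem_filter] at ha
    exact ⟨fun ij => Fintype.mem_piFinset.mp ha.1 ij, ha.2⟩
  -- row functions are injective
  have hrow : ∀ a : (Fin p × Fin d) → (Fin n → ZMod 2), Function.Injective a →
      ∀ i : Fin p, Function.Injective (fun j => a (i, j)) := by
    intro a hainj i j j' hjj
    have : ((i, j) : Fin p × Fin d) = (i, j') := hainj hjj
    exact (Prod.ext_iff.mp this).2
  have hgrow : ∀ a : (Fin p × Fin d) → (Fin n → ZMod 2), Function.Injective a →
      ∀ (σ : Fin d → Equiv.Perm (Fin p)) (i : Fin p),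
        Function.Injective (fun j => a (σ j i, j)) := by
    intro a hainj σ i j j' hjj
    have : ((σ j i, j) : Fin p × Fin d) = (σ j' i, j') := hainj hjj
    exact (Prod.ext_iff.mp this).2
  -- Φ maps Pe into the energy filter set
  set T : Finset ((Fin p → (Fin n → ZMod 2)) × (Fin p → (Fin n → ZMod 2))) :=
    ((Fintype.piFinset fun _ : Fin p => Q) ×ˢ (Fintype.piFinset fun _ : Fin p => Q)).filter
      (fun v => ∑ i, v.1 i = ∑ i, v.2 i) with hT
  have hmaps : ∀ x ∈ Pe, Φ x ∈ T := by
    rintro ⟨a, σ⟩ hx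
    obtain ⟨hmem, hinj⟩ := hIa a (Finset.mem_product.mp hx).1
    rw [hT, Finset.mem_filter, Finset.mem_product]
    refine ⟨⟨?_, ?_⟩, ?_⟩
    · rw [Fintype.mem_piFinset]
      intro i
      obtain ⟨hB, hBsum⟩ := hblock (fun j => a (i, j)) (hrow a hinj i) (fun j => hmem (i, j))
      show (∑ j, a (i, j)) ∈ Q
      rw [hQ, dDot]
      exact Finset.mem_image.mpr ⟨_, hB, hBsum⟩
    · rw [Fintype.mem_piFinset]
      intro i
      obtain ⟨hB, hBsum⟩ :=
        hblock (fun j => a (σ j i, j)) (hgrow a hinj σ i) (fun j => hmem (σ j i, j))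
      show (∑ j, a (σ j i, j)) ∈ Q
      rw [hQ, dDot]
      exact Finset.mem_image.mpr ⟨_, hB, hBsum⟩
    · show ∑ i, ∑ j, a (i, j) = ∑ i, ∑ j, a (σ j i, j)
      calc ∑ i, ∑ j, a (i, j) = ∑ j, ∑ i, a (i, j) := Finset.sum_comm
        _ = ∑ j, ∑ i, a (σ j i, j) :=
            Finset.sum_congr rfl (fun j _ => (Equiv.sum_comp (σ j) (fun i => a (i, j))).symm)
        _ = ∑ i, ∑ j, a (σ j i, j) := Finset.sum_comm
  -- fiber bound
  have hfiber : ∀ b ∈ Pe.image Φ, (Pe.filter fun x => Φ x = b).card ≤ d.factorial ^ p := by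
    intro b hb
    obtain ⟨x₀, hx₀, hx₀b⟩ := Finset.mem_image.mp hb
    obtain ⟨a₀, σ₀⟩ := x₀
    obtain ⟨ha₀mem, ha₀inj⟩ := hIa a₀ (Finset.mem_product.mp hx₀).1
    set B : Fin p → Finset (Fin n → ZMod 2) :=
      fun i => Finset.univ.image (fun j => a₀ (i, j)) with hBdef
    have hBcard : ∀ i, (B i).card = d := by
      intro i
      rw [hBdef]
      rw [Finset.card_image_of_injective _ (hrow a₀ ha₀inj i), Finset.card_univ,
        Fintype.card_fin]
    -- every fiber element has first component with rows in the blocks B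
    have hval : ∀ x ∈ Pe.filter (fun x => Φ x = b), ∀ i : Fin p,
        Finset.univ.image (fun j => x.1 (i, j)) = B i := by
      rintro ⟨a, σ⟩ hx i
      rw [Finset.mem_filter] at hx
      obtain ⟨hamem, hainj⟩ := hIa a (Finset.mem_product.mp hx.1).1
      have hsum : ∑ j, a (i, j) = ∑ j, a₀ (i, j) := by
        have := congrFun (congrArg Prod.fst (hx.2.trans hx₀b.symm)) i
        exact this
      obtain ⟨hB1, hBsum1⟩ := hblock (fun j => a (i, j)) (hrow a hainj i) (fun j => hamem (i, j))
      obtain ⟨hB2, hBsum2⟩ :=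
        hblock (fun j => a₀ (i, j)) (hrow a₀ ha₀inj i) (fun j => ha₀mem (i, j))
      exact sum_inj_blocks hΛ hΛ₁ hB1 hB2 (by rw [hBsum1, hBsum2]; exact hsum)
    -- map the fiber into the grid set via first projection
    have hinto : ∀ x ∈ Pe.filter (fun x => Φ x = b),
        x.1 ∈ (Fintype.piFinset fun ij : Fin p × Fin d => B ij.1).filter Function.Injective := by
      intro x hx
      have hx' := hx
      rw [Finset.mem_filter] at hx'
      obtain ⟨hamem, hainj⟩ := hIa x.1 (Finset.mem_product.mp hx'.1).1
      rw [Finset.mem_filter]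
      constructor
      · rw [Fintype.mem_piFinset]
        intro ij
        have := hval x hx ij.1
        rw [← this]
        exact Finset.mem_image.mpr ⟨ij.2, Finset.mem_univ _, rfl⟩
      · exact hainj
    have hinjOn : Set.InjOn (fun x : ((Fin p × Fin d → Fin n → ZMod 2) × (Fin d → Equiv.Perm (Fin p))) => x.1) (↑(Pe.filter (fun x => Φ x = b))) := by
      rintro ⟨a, σ⟩ hx ⟨a', σ'⟩ hy hxy
      simp only [Finset.coe_filter, Set.mem_setOf_eq] at hx hy
      have ha : a = a' := hxy
      subst ha
      obtain ⟨hamem, hainj⟩ := hIa a (Finset.mem_product.mp hx.1).1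
      -- show σ = σ'
      have hσ : σ = σ' := by
        have hsnd : ∀ i, ∑ j, a (σ j i, j) = ∑ j, a (σ' j i, j) := by
          intro i
          exact congrFun (congrArg Prod.snd (hx.2.trans hy.2.symm)) i
        have hsets : ∀ i, Finset.univ.image (fun j => a (σ j i, j)) =
            Finset.univ.image (fun j => a (σ' j i, j)) := by
          intro i
          obtain ⟨hC1, hC1sum⟩ :=
            hblock (fun j => a (σ j i, j)) (hgrow a hainj σ i) (fun j => hamem (σ j i, j))
          obtain ⟨hC2, hC2sum⟩ :=
            hblock (fun j => a (σ' j i, j)) (hgrow a hainj σ' i) (fun j => hamem (σ' j i, j))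
          exact sum_inj_blocks hΛ hΛ₁ hC1 hC2 (by rw [hC1sum, hC2sum]; exact hsnd i)
        funext j
        apply Equiv.ext
        intro i
        have : a (σ j i, j) ∈ Finset.univ.image (fun j' => a (σ' j' i, j')) := by
          rw [← hsets i]
          exact Finset.mem_image.mpr ⟨j, Finset.mem_univ _, rfl⟩
        obtain ⟨j', _, hj'⟩ := Finset.mem_image.mp this
        have hpair : ((σ' j' i, j') : Fin p × Fin d) = (σ j i, j) := hainj hj'
        obtain ⟨he1, he2⟩ := Prod.ext_iff.mp hpair
        have hj : j' = j := he2
        subst hj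
        exact he1.symm
      rw [hσ]
    have hle1 : (Pe.filter fun x => Φ x = b).card ≤
        ((Fintype.piFinset fun ij : Fin p × Fin d => B ij.1).filter Function.Injective).card :=
      Finset.card_le_card_of_injOn (fun x => x.1) hinto hinjOn
    exact hle1.trans (grid_count B hBcard)
  -- cardinality of Pe
  have hPecard : Pe.card = I.card * p.factorial ^ d := by
    rw [hPe, Finset.card_product, Finset.card_univ, Fintype.card_fun, Fintype.card_perm,
      Fintype.card_fin, Fintype.card_fin]
  -- lower bound on I.card
  have hIcard : L.descFactorial (p * d) ≤ I.card := by
    have hemb : Fintype.card (Fin p × Fin d ↪ {y // y ∈ Λ₁}) = L.descFactorial (p * d) := by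
      rw [Fintype.card_embedding_eq, Fintype.card_coe, Fintype.card_prod, Fintype.card_fin,
        Fintype.card_fin]
    rw [← hemb, ← Fintype.card_coe I]
    apply Fintype.card_le_of_injective
      (fun e => (⟨fun ij => (e ij : Fin n → ZMod 2), by
        rw [hI, Finset.mem_filter]
        constructor
        · rw [Fintype.mem_piFinset]; intro ij; exact (e ij).2
        · intro x y hxy
          exact e.injective (Subtype.ext hxy)⟩ : {a // a ∈ I}))
    intro e e' hee
    apply DFunLike.ext
    intro ij
    have := congrFun (congrArg Subtype.val hee) ij
    exact Subtype.ext this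
  -- the key counting inequality
  have hcount : L.descFactorial (p * d) * p.factorial ^ d ≤ d.factorial ^ p * addEnergy p Q := by
    have h1 : Pe.card ≤ d.factorial ^ p * (Pe.image Φ).card :=
      Finset.card_le_mul_card_image Pe (d.factorial ^ p) hfiber
    have h2 : (Pe.image Φ).card ≤ addEnergy p Q := by
      apply Finset.card_le_card
      intro y hy
      obtain ⟨x, hx, rfl⟩ := Finset.mem_image.mp hy
      exact hmaps x hx
    calc L.descFactorial (p * d) * p.factorial ^ d ≤ I.card * p.factorial ^ d :=
          Nat.mul_le_mul_right _ hIcard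
      _ = Pe.card := hPecard.symm
      _ ≤ d.factorial ^ p * (Pe.image Φ).card := h1
      _ ≤ d.factorial ^ p * addEnergy p Q := Nat.mul_le_mul_left _ h2
  -- now the real arithmetic
  have hQle : (Q.card : ℝ) * (d.factorial : ℝ) ≤ (L : ℝ) ^ d := by
    have h1 : Q.card ≤ L.choose d := by
      rw [hQ, dDot]
      exact Finset.card_image_le.trans (le_of_eq (by rw [Finset.card_powersetCard]))
    have h2 : L.choose d * d.factorial ≤ L ^ d := by
      rw [mul_comm, ← Nat.descFactorial_eq_factorial_mul_choose]
      exact Nat.descFactorial_le_pow _ _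
    have h3 : Q.card * d.factorial ≤ L ^ d :=
      le_trans (Nat.mul_le_mul_right _ h1) h2
    exact_mod_cast h3
  have hdesc : ((L : ℝ) / 2) ^ (p * d) ≤ (L.descFactorial (p * d) : ℝ) := by
    rw [Nat.descFactorial_eq_prod_range]
    calc ((L : ℝ) / 2) ^ (p * d) = ∏ _i ∈ Finset.range (p * d), ((L : ℝ) / 2) := by
          rw [Finset.prod_const, Finset.card_range]
      _ ≤ ∏ i ∈ Finset.range (p * d), ((L - i : ℕ) : ℝ) := by
          apply Finset.prod_le_prod
          · intro i _; positivity
          · intro i hi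
            rw [Finset.mem_range] at hi
            have h5 : p * d ≤ 2 * d * p := by nlinarith
            have hiL : i ≤ L := le_of_lt (lt_of_lt_of_le hi (h5.trans hL))
            rw [Nat.cast_sub hiL]
            have h1 : (i : ℝ) < (p * d : ℕ) := by exact_mod_cast hi
            have h2 : ((2 * d * p : ℕ) : ℝ) ≤ (L : ℝ) := by exact_mod_cast hL
            push_cast at h1 h2 ⊢
            nlinarith
      _ = ((∏ i ∈ Finset.range (p * d), (L - i) : ℕ) : ℝ) := by rw [Nat.cast_prod]
  have hfact : ((p : ℝ)) ^ p ≤ 4 ^ p * (p.factorial : ℝ) := by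
    have := pow_self_le_nat p
    exact_mod_cast this
  -- put it together
  have hkey : ((L.descFactorial (p * d) : ℝ)) * ((p.factorial : ℝ)) ^ d ≤
      ((d.factorial : ℝ)) ^ p * (addEnergy p Q : ℝ) := by
    exact_mod_cast hcount
  have hDpos : (0 : ℝ) < ((d.factorial : ℝ)) ^ p := by positivity
  have hmain : (p : ℝ) ^ (p * d) * (Q.card : ℝ) ^ p * ((d.factorial : ℝ)) ^ p ≤
      (2 : ℝ) ^ (3 * p * d) * (((d.factorial : ℝ)) ^ p * (addEnergy p Q : ℝ)) := by
    calc (p : ℝ) ^ (p * d) * (Q.card : ℝ) ^ p * ((d.factorial : ℝ)) ^ p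
        = ((p : ℝ) ^ p) ^ d * ((Q.card : ℝ) * (d.factorial : ℝ)) ^ p := by
          rw [pow_mul, mul_assoc, ← mul_pow]
      _ ≤ ((p : ℝ) ^ p) ^ d * ((L : ℝ) ^ d) ^ p := by
          apply mul_le_mul_of_nonneg_left _ (by positivity)
          exact pow_le_pow_left₀ (by positivity) hQle p
      _ ≤ ((4 : ℝ) ^ p * (p.factorial : ℝ)) ^ d * ((L : ℝ) ^ d) ^ p := by
          apply mul_le_mul_of_nonneg_right _ (by positivity)
          exact pow_le_pow_left₀ (by positivity) hfact d
      _ = (2 : ℝ) ^ (2 * (p * d)) * (p.factorial : ℝ) ^ d * (((L : ℝ) / 2) * 2) ^ (p * d) := by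
          rw [show ((L : ℝ) / 2) * 2 = (L : ℝ) by field_simp]
          rw [mul_pow, ← pow_mul, ← pow_mul, show (4 : ℝ) = 2 ^ 2 by norm_num, ← pow_mul]
          ring_nf
      _ = (2 : ℝ) ^ (3 * p * d) * (((L : ℝ) / 2) ^ (p * d) * (p.factorial : ℝ) ^ d) := by
          rw [mul_pow]
          rw [show 3 * p * d = 2 * (p * d) + p * d by ring, pow_add]
          ring
      _ ≤ (2 : ℝ) ^ (3 * p * d) *
          ((L.descFactorial (p * d) : ℝ) * (p.factorial : ℝ) ^ d) := by
          apply mul_le_mul_of_nonneg_left _ (by positivity)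
          apply mul_le_mul_of_nonneg_right hdesc (by positivity)
      _ ≤ (2 : ℝ) ^ (3 * p * d) * (((d.factorial : ℝ)) ^ p * (addEnergy p Q : ℝ)) := by
          apply mul_le_mul_of_nonneg_left hkey (by positivity)
  have h2pos : (0 : ℝ) < (2 : ℝ) ^ (3 * p * d) := by positivity
  have hfinal : (p : ℝ) ^ (p * d) * (Q.card : ℝ) ^ p ≤
      (2 : ℝ) ^ (3 * p * d) * (addEnergy p Q : ℝ) := by
    have h := hmain
    rw [show (2 : ℝ) ^ (3 * p * d) * (((d.factorial : ℝ)) ^ p * (addEnergy p Q : ℝ)) =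
      ((2 : ℝ) ^ (3 * p * d) * (addEnergy p Q : ℝ)) * ((d.factorial : ℝ)) ^ p by ring] at h
    exact le_of_mul_le_mul_right h hDpos
  calc ((2 : ℝ) ^ (3 * p * d))⁻¹ * (p : ℝ) ^ (p * d) * (Q.card : ℝ) ^ p
      = ((p : ℝ) ^ (p * d) * (Q.card : ℝ) ^ p) / (2 : ℝ) ^ (3 * p * d) := by ring
    _ ≤ (addEnergy p Q : ℝ) := by
        rw [div_le_iff₀ h2pos]
        linarith [hfinal]
end

section
/- Let δ, α be real numbers with 0 < α ≤ δ ≤ 1/4, let d be a positive integer with d ≤ log(1/δ)/4, let A ⊆ F_2^n with |A| = δN where N = 2^n, and let R_α = {r ∈ F_2^n : |Â(r)| ≥ αN}. Suppose Λ ⊆ F_2^n belongs to the family 𝚲(2 log(1/δ)). Then |d·̇Λ ∩ R_α| ≤ (δ/α)² · (2^{12} log(1/δ)/d)^d. Here log denotes the logarithm to base 2. -/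
open Finset

/-- The Fourier transform of (the indicator of) `A ⊆ F_2^n`:
`Â(r) = ∑_{x ∈ A} (−1)^{⟨r,x⟩}`. -/
def fourierF2 {n : ℕ} (A : Finset (Fin n → ZMod 2)) (r : Fin n → ZMod 2) : ℝ :=
  ∑ x ∈ A, (-1 : ℝ) ^ (∑ i, r i * x i : ZMod 2).val

/-- The set `R_α = { r : |Â(r)| ≥ α N }` of large Fourier coefficients. -/
noncomputable def specLarge {n : ℕ} (A : Finset (Fin n → ZMod 2)) (α : ℝ) :
    Finset (Fin n → ZMod 2) :=
  Finset.univ.filter fun r => α * 2 ^ n ≤ |fourierF2 A r|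

/-!
Let `𝒮` be the `d`-subsets of `Λ` whose sums lie in `R_α`, and `f = ∑_{t ∈ 𝒮} ± χ_{∑ t}` with the
signs chosen so that `∑_{x ∈ A} f x = ∑_{t ∈ 𝒮} |Â(∑ t)| ≥ α N |𝒮|`. By the power mean inequality
`(α N |𝒮|)^{2k} ≤ |A|^{2k-1} ∑_x f(x)^{2k}`. The `2k`-th moment of `f` counts the `2k`-tuples in `𝒮`
with zero sum; as `Λ` has no zero sums of length `≤ 2kd`, these are exactly the tuples covering
every element of `Λ` an even number of times. So the moment equals that of the degree-`d` Walsh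
polynomial `∑_{t ∈ 𝒮} ± w_t` on a cube with independent coordinates, which Bonami's
hypercontractive inequality bounds by `N ((2k)^d |𝒮|)^k`. Taking `k ≈ log(1/δ)/d` finishes.
-/

lemma neg_one_pow_val_add (a b : ZMod 2) :
    (-1 : ℝ) ^ (a + b).val = (-1) ^ a.val * (-1) ^ b.val := by
  rw [ZMod.val_add, ← neg_one_pow_eq_pow_mod_two, pow_add]

lemma sum_range_mul_one_add_neg_one_pow {R : Type*} [CommRing R] (f : ℕ → R) (k : ℕ) :
    ∑ m ∈ range (2 * k + 1), f m * (1 + (-1) ^ m) = 2 * ∑ j ∈ range (k + 1), f (2 * j) := by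
  induction k with
  | zero => simp; ring
  | succ k ih =>
    rw [show 2 * (k + 1) + 1 = 2 * k + 1 + 1 + 1 by ring, sum_range_succ, sum_range_succ, ih,
      sum_range_succ _ (k + 1)]
    have hodd : (-1 : R) ^ (2 * k + 1) = -1 := by rw [pow_succ, pow_mul]; simp
    have heven : (-1 : R) ^ (2 * k + 1 + 1) = 1 := by rw [pow_succ, hodd]; simp
    rw [hodd, heven, show 2 * (k + 1) = 2 * k + 1 + 1 by ring]
    ring

lemma add_pow_two_mul_add_neg_add_pow_two_mul {R : Type*} [CommRing R] (x y : R) (k : ℕ) :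
    (x + y) ^ (2 * k) + (-x + y) ^ (2 * k) =
      2 * ∑ j ∈ range (k + 1),
        ((2 * k).choose (2 * j) : R) * ((y ^ 2) ^ (k - j) * (x ^ 2) ^ j) := by
  have h := sum_range_mul_one_add_neg_one_pow
    (fun m => ((2 * k).choose m : R) * (y ^ (2 * k - m) * x ^ m)) k
  rw [add_pow, add_pow, ← sum_add_distrib]
  convert h using 1
  · refine sum_congr rfl fun m _ => ?_
    rw [neg_pow]
    ring
  · simp only [← pow_mul, Nat.mul_sub]

theorem Nat.choose_two_mul_two_mul_le (k : ℕ) {j : ℕ} (hj : j ≤ k) :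
    (2 * k).choose (2 * j) ≤ k.choose j * (2 * k) ^ j := by
  induction j with
  | zero => simp
  | succ j ih =>
    obtain ⟨m, rfl⟩ : ∃ m, k = j + 1 + m := ⟨k - (j + 1), by omega⟩
    have e1 := Nat.choose_succ_right_eq (2 * (j + 1 + m)) (2 * j)
    have e2 := Nat.choose_succ_right_eq (2 * (j + 1 + m)) (2 * j + 1)
    have e3 := Nat.choose_succ_right_eq (j + 1 + m) j
    rw [show 2 * (j + 1 + m) - 2 * j = 2 * m + 2 by omega] at e1
    rw [show 2 * (j + 1 + m) - (2 * j + 1) = 2 * m + 1 by omega] at e2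
    rw [show j + 1 + m - j = m + 1 by omega] at e3
    have ih := ih (by omega)
    refine Nat.le_of_mul_le_mul_right (c := (2 * j + 1) * (2 * j + 2)) ?_ (by positivity)
    have hm : 2 * m + 1 ≤ 2 * (j + 1 + m) * (2 * j + 1) := by nlinarith
    calc (2 * (j + 1 + m)).choose (2 * (j + 1)) * ((2 * j + 1) * (2 * j + 2))
        = (2 * (j + 1 + m)).choose (2 * j) * ((2 * m + 2) * (2 * m + 1)) := by
          rw [show 2 * (j + 1) = 2 * j + 1 + 1 by ring]
          linear_combination (2 * j + 1) * e2 + (2 * m + 1) * e1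
      _ ≤ (j + 1 + m).choose j * (2 * (j + 1 + m)) ^ j *
          ((2 * m + 2) * (2 * (j + 1 + m) * (2 * j + 1))) := by gcongr
      _ = (j + 1 + m).choose (j + 1) * (2 * (j + 1 + m)) ^ (j + 1) *
          ((2 * j + 1) * (2 * j + 2)) := by
          rw [pow_succ]
          linear_combination (2 * (2 * (j + 1 + m)) ^ j * (2 * (j + 1 + m)) * (2 * j + 1)) * e3.symm

lemma pow_sum_pow_mul_pow_le {ι : Type*} (s : Finset ι) {u v : ι → ℝ} (hu : ∀ i ∈ s, 0 ≤ u i)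
    (hv : ∀ i ∈ s, 0 ≤ v i) (a b : ℕ) :
    (∑ i ∈ s, u i ^ a * v i ^ b) ^ (a + b) ≤
      (∑ i ∈ s, u i ^ (a + b)) ^ a * (∑ i ∈ s, v i ^ (a + b)) ^ b := by
  obtain rfl | ha := Nat.eq_zero_or_pos a
  · simp
  obtain rfl | hb := Nat.eq_zero_or_pos b
  · simp
  have hpow : ∀ z : ℝ, 0 ≤ z → ∀ c : ℕ, 0 < c → (z ^ c) ^ (((a + b : ℕ) : ℝ) / c) = z ^ (a + b) :=
    fun z hz c hc => by
      rw [← Real.rpow_natCast z c, ← Real.rpow_mul hz, mul_div_cancel₀ _ (by positivity),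
        Real.rpow_natCast]
  have hroot : ∀ S : ℝ, 0 ≤ S → ∀ c : ℕ, 0 < c →
      (S ^ (1 / (((a + b : ℕ) : ℝ) / c))) ^ (a + b) = S ^ c :=
    fun S hS c hc => by
      rw [← Real.rpow_natCast _ (a + b), ← Real.rpow_mul hS, one_div_div,
        div_mul_cancel₀ _ (by positivity), Real.rpow_natCast]
  have hpq : (((a + b : ℕ) : ℝ) / a).HolderConjugate (((a + b : ℕ) : ℝ) / b) := by
    rw [Real.holderConjugate_iff]
    push_cast
    refine ⟨(one_lt_div (by positivity)).mpr (by simp; positivity), ?_⟩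
    field_simp
  have H := Real.inner_le_Lp_mul_Lq_of_nonneg s hpq (f := fun i => u i ^ a) (g := fun i => v i ^ b)
    (fun i hi => pow_nonneg (hu i hi) a) (fun i hi => pow_nonneg (hv i hi) b)
  rw [sum_congr rfl fun i hi => hpow _ (hu i hi) a ha,
    sum_congr rfl fun i hi => hpow _ (hv i hi) b hb] at H
  have hU : 0 ≤ ∑ i ∈ s, u i ^ (a + b) := sum_nonneg fun i hi => pow_nonneg (hu i hi) _
  have hV : 0 ≤ ∑ i ∈ s, v i ^ (a + b) := sum_nonneg fun i hi => pow_nonneg (hv i hi) _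
  calc _ ≤ ((∑ i ∈ s, u i ^ (a + b)) ^ (1 / (((a + b : ℕ) : ℝ) / a)) *
        (∑ i ∈ s, v i ^ (a + b)) ^ (1 / (((a + b : ℕ) : ℝ) / b))) ^ (a + b) :=
        pow_le_pow_left₀ (sum_nonneg fun i hi => mul_nonneg (pow_nonneg (hu i hi) a)
          (pow_nonneg (hv i hi) b)) H _
    _ = _ := by rw [mul_pow, hroot _ hU a ha, hroot _ hV b hb]

lemma sum_pow_mul_pow_le {ι : Type*} (s : Finset ι) {u v : ι → ℝ} (hu : ∀ i ∈ s, 0 ≤ u i)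
    (hv : ∀ i ∈ s, 0 ≤ v i) {a b : ℕ} (hab : 0 < a + b) {N x y : ℝ} (hN : 0 ≤ N) (hx : 0 ≤ x)
    (hy : 0 ≤ y) (hux : ∑ i ∈ s, u i ^ (a + b) ≤ N * x ^ (a + b))
    (hvy : ∑ i ∈ s, v i ^ (a + b) ≤ N * y ^ (a + b)) :
    ∑ i ∈ s, u i ^ a * v i ^ b ≤ N * (x ^ a * y ^ b) := by
  refine le_of_pow_le_pow_left₀ hab.ne' (by positivity) ?_
  calc _ ≤ (∑ i ∈ s, u i ^ (a + b)) ^ a * (∑ i ∈ s, v i ^ (a + b)) ^ b :=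
        pow_sum_pow_mul_pow_le s hu hv a b
    _ ≤ (N * x ^ (a + b)) ^ a * (N * y ^ (a + b)) ^ b := by
        have hU : 0 ≤ ∑ i ∈ s, u i ^ (a + b) := sum_nonneg fun i hi => pow_nonneg (hu i hi) _
        have hV : 0 ≤ ∑ i ∈ s, v i ^ (a + b) := sum_nonneg fun i hi => pow_nonneg (hv i hi) _
        exact mul_le_mul (pow_le_pow_left₀ hU hux a) (pow_le_pow_left₀ hV hvy b) (by positivity)
          (by positivity)
    _ = _ := by ring

lemma sum_choose_two_mul_mul_pow_le {x y : ℝ} (hx : 0 ≤ x) (hy : 0 ≤ y) (k : ℕ) :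
    ∑ j ∈ range (k + 1), ((2 * k).choose (2 * j) : ℝ) * (x ^ (k - j) * y ^ j) ≤
      (x + 2 * k * y) ^ k := by
  rw [add_comm x, add_pow]
  refine sum_le_sum fun j hj => ?_
  have hc : ((2 * k).choose (2 * j) : ℝ) ≤ k.choose j * (2 * k) ^ j := by
    exact_mod_cast Nat.choose_two_mul_two_mul_le k (Nat.lt_succ_iff.mp (mem_range.mp hj))
  calc _ ≤ (k.choose j * (2 * k) ^ j : ℝ) * (x ^ (k - j) * y ^ j) := by gcongr
    _ = _ := by ring

section Walsh

variable {W : Type*} [Fintype W]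

def walsh (c : W → ZMod 2) : AddChar (W → ZMod 2) ℝ where
  toFun y := (-1) ^ (c ⬝ᵥ y).val
  map_zero_eq_one' := by simp
  map_add_eq_mul' y y' := by rw [dotProduct_add, neg_one_pow_val_add]

lemma walsh_apply (c y : W → ZMod 2) : walsh c y = (-1) ^ (c ⬝ᵥ y).val := rfl

lemma walsh_comm (c y : W → ZMod 2) : walsh c y = walsh y c := by
  rw [walsh_apply, walsh_apply, dotProduct_comm]

lemma walsh_sum_left {ι : Type*} (s : Finset ι) (c : ι → W → ZMod 2) (y : W → ZMod 2) :
    walsh (∑ i ∈ s, c i) y = ∏ i ∈ s, walsh (c i) y := by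
  classical
  induction s using Finset.induction_on with
  | empty => simp [walsh_apply]
  | insert i s hi ih =>
    rw [sum_insert hi, prod_insert hi, walsh_comm, AddChar.map_add_eq_mul, ← ih, walsh_comm y,
      walsh_comm y]

variable [DecidableEq W]

lemma walsh_eq_zero_iff {c : W → ZMod 2} : walsh c = 0 ↔ c = 0 := by
  refine ⟨fun h => ?_, fun h => by ext y; simp [h, walsh_apply]⟩
  by_contra hc
  obtain ⟨w, hw⟩ := Function.ne_iff.mp hc
  have hw1 : c w = 1 := (by decide : ∀ a : ZMod 2, a ≠ 0 → a = 1) _ hw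
  have := DFunLike.congr_fun h (Pi.single w 1)
  rw [walsh_apply, dotProduct_single, hw1, mul_one, AddChar.zero_apply] at this
  norm_num [ZMod.val_one] at this

lemma sum_walsh (c : W → ZMod 2) :
    ∑ y, walsh c y = if c = 0 then 2 ^ Fintype.card W else 0 := by
  classical
  rw [AddChar.sum_eq_ite]
  by_cases hc : c = 0 <;> simp [hc, walsh_eq_zero_iff, ZMod.card]

lemma sum_pow_sum_walsh {ι : Type*} (m : ℕ) (T : Finset ι) (σ : ι → ℝ) (v : ι → W → ZMod 2) :
    ∑ y, (∑ r ∈ T, σ r * walsh (v r) y) ^ m =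
      2 ^ Fintype.card W *
        ∑ c ∈ Fintype.piFinset (fun _ : Fin m => T) with ∑ i, v (c i) = 0, ∏ i, σ (c i) := by
  simp_rw [sum_pow', prod_mul_distrib, ← walsh_sum_left]
  rw [sum_comm]
  simp_rw [← mul_sum, sum_walsh, sum_filter, mul_sum]
  refine sum_congr rfl fun c _ => ?_
  split_ifs <;> ring

lemma sum_pow_sum_walsh_eq_of_iff {W' ι : Type*} [Fintype W'] [DecidableEq W'] {m : ℕ}
    {T : Finset ι} (σ : ι → ℝ) {v : ι → W → ZMod 2} {v' : ι → W' → ZMod 2}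
    (h : ∀ c ∈ Fintype.piFinset (fun _ : Fin m => T), ∑ i, v (c i) = 0 ↔ ∑ i, v' (c i) = 0) :
    2 ^ Fintype.card W' * ∑ y, (∑ r ∈ T, σ r * walsh (v r) y) ^ m =
      2 ^ Fintype.card W * ∑ y, (∑ r ∈ T, σ r * walsh (v' r) y) ^ m := by
  rw [sum_pow_sum_walsh, sum_pow_sum_walsh, filter_congr h]
  ring

end Walsh

/-- `Λ ∈ 𝚲(M)`. -/
def ZeroSumFreeUpTo {G : Type*} [AddCommMonoid G] (M : ℝ) (Λ : Finset G) : Prop :=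
  ∀ S ⊆ Λ, S.Nonempty → (S.card : ℝ) ≤ M → ∑ x ∈ S, x ≠ 0

lemma ZeroSumFreeUpTo.mono {G : Type*} [AddCommMonoid G] {M M' : ℝ} {Λ : Finset G}
    (hΛ : ZeroSumFreeUpTo M Λ) (h : M' ≤ M) : ZeroSumFreeUpTo M' Λ :=
  fun S hS hne hcard => hΛ S hS hne (hcard.trans h)

namespace ZeroSumFreeUpTo

variable {G : Type*} [AddCommGroup G] [Module (ZMod 2) G] {M : ℝ} {Λ : Finset G}

lemma sum_smul_eq_zero_iff (hΛ : ZeroSumFreeUpTo M Λ) {D : Finset G} (hD : D ⊆ Λ)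
    (hDM : (D.card : ℝ) ≤ M) (u : G → ZMod 2) :
    ∑ l ∈ D, u l • l = 0 ↔ ∀ l ∈ D, u l = 0 := by
  refine ⟨fun h => ?_, fun h => sum_eq_zero fun l hl => by rw [h l hl, zero_smul]⟩
  by_contra! hne
  obtain ⟨l, hl, hul⟩ := hne
  refine hΛ (D.filter (u · ≠ 0)) ((filter_subset _ _).trans hD) ⟨l, mem_filter.mpr ⟨hl, hul⟩⟩
    ((Nat.cast_le.mpr (card_filter_le _ _)).trans hDM) ?_
  rw [sum_filter, ← h]
  refine sum_congr rfl fun x _ => ?_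
  rcases (by decide : ∀ a : ZMod 2, a = 0 ∨ a = 1) (u x) with h0 | h1 <;> simp [*]

variable [DecidableEq G]

lemma sum_sum_eq_zero_iff (hΛ : ZeroSumFreeUpTo M Λ) {ι : Type*} (s : Finset ι)
    (S : ι → Finset G) (hS : ∀ i ∈ s, S i ⊆ Λ) (hM : ((∑ i ∈ s, (S i).card : ℕ) : ℝ) ≤ M) :
    ∑ i ∈ s, ∑ x ∈ S i, x = 0 ↔ ∑ i ∈ s, (fun l => if l ∈ S i then (1 : ZMod 2) else 0) = 0 := by
  set D := s.biUnion S
  have hSD : ∀ i ∈ s, S i ⊆ D := fun i hi => subset_biUnion_of_mem S hi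
  have hsum : ∑ i ∈ s, ∑ x ∈ S i, x =
      ∑ l ∈ D, (∑ i ∈ s, if l ∈ S i then (1 : ZMod 2) else 0) • l := by
    simp_rw [sum_smul, ite_smul, one_smul, zero_smul]
    rw [sum_comm]
    refine sum_congr rfl fun i hi => ?_
    rw [sum_ite_mem, inter_eq_right.mpr (hSD i hi)]
  rw [hsum, hΛ.sum_smul_eq_zero_iff (biUnion_subset.mpr hS)
    ((Nat.cast_le.mpr card_biUnion_le).trans hM), funext_iff]
  simp only [Finset.sum_apply, Pi.zero_apply]
  refine ⟨fun h l => ?_, fun h l _ => h l⟩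
  by_cases hl : l ∈ D
  · exact h l hl
  · exact sum_eq_zero fun i hi => if_neg fun hlS => hl (hSD i hi hlS)

end ZeroSumFreeUpTo

section Hypercontractivity

variable {V : Type*}

def walshMonomial (t : Finset V) (y : V → ZMod 2) : ℝ := (-1) ^ (∑ l ∈ t, y l).val

lemma walshMonomial_empty (y : V → ZMod 2) : walshMonomial ∅ y = 1 := by
  simp [walshMonomial]

variable [DecidableEq V]

lemma walshMonomial_insert {t : Finset V} {i : V} (hi : i ∉ t) (y : V → ZMod 2) :
    walshMonomial (insert i t) y = (-1) ^ (y i).val * walshMonomial t y := by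
  rw [walshMonomial, walshMonomial, sum_insert hi, neg_one_pow_val_add]

lemma walshMonomial_add_single {t : Finset V} {i : V} (hi : i ∉ t) (y : V → ZMod 2) :
    walshMonomial t (y + Pi.single i 1) = walshMonomial t y := by
  simp only [walshMonomial, Pi.add_apply, sum_add_distrib, sum_pi_single', if_neg hi, add_zero]

variable [Fintype V]

lemma walshMonomial_eq_walsh (t : Finset V) (y : V → ZMod 2) :
    walshMonomial t y = walsh (fun l => if l ∈ t then 1 else 0) y := by
  simp_rw [walshMonomial, walsh_apply, dotProduct, ite_mul, one_mul, zero_mul, sum_ite_mem,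
    univ_inter]

lemma sum_pow_two_mul_eq_of_eq_add (i : V) {F g h : (V → ZMod 2) → ℝ}
    (hF : ∀ y, F y = g y + (-1) ^ (y i).val * h y)
    (hg : ∀ y, g (y + Pi.single i 1) = g y) (hh : ∀ y, h (y + Pi.single i 1) = h y) (k : ℕ) :
    ∑ y, F y ^ (2 * k) =
      ∑ j ∈ range (k + 1),
        ((2 * k).choose (2 * j) : ℝ) * ∑ y, (g y ^ 2) ^ (k - j) * (h y ^ 2) ^ j := by
  have hflip : ∀ y, F (y + Pi.single i 1) = -((-1) ^ (y i).val * h y) + g y := by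
    intro y
    rw [hF, hg, hh, Pi.add_apply, Pi.single_eq_same, neg_one_pow_val_add, ZMod.val_one]
    ring
  have hsq : ∀ y, ((-1 : ℝ) ^ (y i).val * h y) ^ 2 = h y ^ 2 := fun y => by
    rw [mul_pow, ← pow_mul, Even.neg_one_pow ⟨(y i).val, by ring⟩, one_mul]
  refine mul_left_cancel₀ (two_ne_zero (α := ℝ)) ?_
  calc 2 * ∑ y, F y ^ (2 * k) = ∑ y, (F y ^ (2 * k) + F (y + Pi.single i 1) ^ (2 * k)) := by
        rw [sum_add_distrib, two_mul]
        congr 1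
        exact (Fintype.sum_equiv (Equiv.addRight (Pi.single i 1)) _ _ fun _ => rfl).symm
    _ = ∑ y, 2 * ∑ j ∈ range (k + 1),
          ((2 * k).choose (2 * j) : ℝ) * ((g y ^ 2) ^ (k - j) * (h y ^ 2) ^ j) := by
        refine sum_congr rfl fun y _ => ?_
        rw [hF, hflip, add_comm (g y), add_pow_two_mul_add_neg_add_pow_two_mul, hsq]
    _ = _ := by
        rw [← mul_sum, sum_comm]
        simp_rw [mul_sum]

lemma sum_pow_sum_walshMonomial_of_forall_eq_empty (k : ℕ) (s : Finset V) (a : Finset V → ℝ)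
    (ha : ∀ t ⊆ s, a t ≠ 0 → t = ∅) :
    ∑ y, (∑ t ∈ s.powerset, a t * walshMonomial t y) ^ (2 * k) =
      2 ^ Fintype.card V * (∑ t ∈ s.powerset, a t ^ 2) ^ k := by
  have hzero : ∀ t ∈ s.powerset, t ≠ ∅ → a t = 0 := fun t ht hne =>
    by_contra fun h => hne (ha t (mem_powerset.mp ht) h)
  have hF : ∀ y, ∑ t ∈ s.powerset, a t * walshMonomial t y = a ∅ := fun y => by
    rw [sum_eq_single_of_mem ∅ (empty_mem_powerset s) fun t ht hne => by simp [hzero t ht hne],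
      walshMonomial_empty, mul_one]
  have hA : ∑ t ∈ s.powerset, a t ^ 2 = a ∅ ^ 2 :=
    sum_eq_single_of_mem ∅ (empty_mem_powerset s) fun t ht hne => by simp [hzero t ht hne]
  simp [hF, hA, pow_mul, ZMod.card]

lemma sum_pow_two_mul_le_of_eq_add (i : V) {F g h : (V → ZMod 2) → ℝ}
    (hF : ∀ y, F y = g y + (-1) ^ (y i).val * h y)
    (hg : ∀ y, g (y + Pi.single i 1) = g y) (hh : ∀ y, h (y + Pi.single i 1) = h y)
    {k : ℕ} (hk : 0 < k) {N P Q : ℝ} (hN : 0 ≤ N) (hP : 0 ≤ P) (hQ : 0 ≤ Q)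
    (hgP : ∑ y, (g y ^ 2) ^ k ≤ N * P ^ k) (hhQ : ∑ y, (h y ^ 2) ^ k ≤ N * Q ^ k) :
    ∑ y, F y ^ (2 * k) ≤ N * (P + 2 * k * Q) ^ k := by
  rw [sum_pow_two_mul_eq_of_eq_add i hF hg hh k]
  calc _ ≤ ∑ j ∈ range (k + 1), ((2 * k).choose (2 * j) : ℝ) * (N * (P ^ (k - j) * Q ^ j)) := by
        gcongr with j hj
        have hjk : k - j + j = k := Nat.sub_add_cancel (Nat.lt_succ_iff.mp (mem_range.mp hj))
        refine sum_pow_mul_pow_le _ (fun _ _ => sq_nonneg _) (fun _ _ => sq_nonneg _) (by omega)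
          hN hP hQ ?_ ?_ <;> rwa [hjk]
    _ ≤ N * (P + 2 * k * Q) ^ k := by
        simp_rw [mul_left_comm _ N, ← mul_sum]
        gcongr
        exact sum_choose_two_mul_mul_pow_le hP hQ k

/-- Bonami's hypercontractive inequality for Walsh polynomials of degree `≤ d`. -/
theorem sum_pow_sum_walshMonomial_le {k : ℕ} (hk : 0 < k) (s : Finset V) (d : ℕ)
    (a : Finset V → ℝ) (ha : ∀ t ⊆ s, a t ≠ 0 → t.card ≤ d) :
    ∑ y, (∑ t ∈ s.powerset, a t * walshMonomial t y) ^ (2 * k) ≤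
      2 ^ Fintype.card V * ((2 * k) ^ d * ∑ t ∈ s.powerset, a t ^ 2) ^ k := by
  have hK : (1 : ℝ) ≤ 2 * k := by
    have : (1 : ℝ) ≤ k := by exact_mod_cast hk
    linarith
  induction s using Finset.induction_on generalizing d a with
  | empty =>
    rw [sum_pow_sum_walshMonomial_of_forall_eq_empty k ∅ a fun t ht _ => subset_empty.mp ht]
    gcongr
    exact le_mul_of_one_le_left (sum_nonneg fun _ _ => sq_nonneg _) (one_le_pow₀ hK)
  | insert i s hi ih =>
    cases d with
    | zero =>
      rw [sum_pow_sum_walshMonomial_of_forall_eq_empty k _ a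
        fun t ht hne => card_eq_zero.mp (Nat.le_zero.mp (ha t ht hne)), pow_zero, one_mul]
    | succ d =>
      have hi' : ∀ t ∈ s.powerset, i ∉ t := fun t ht hit => hi (mem_powerset.mp ht hit)
      have hg := ih (d + 1) a fun t ht => ha t (ht.trans (subset_insert i s))
      have hh := ih d (fun t => a (insert i t)) fun t ht hne => by
        have := ha _ (insert_subset_insert i ht) hne
        rw [card_insert_of_notMem fun hit => hi (ht hit)] at this
        omega
      simp_rw [pow_mul] at hg hh
      have hF : ∀ y, ∑ t ∈ (insert i s).powerset, a t * walshMonomial t y =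
          ∑ t ∈ s.powerset, a t * walshMonomial t y +
            (-1) ^ (y i).val * ∑ t ∈ s.powerset, a (insert i t) * walshMonomial t y := fun y => by
        rw [sum_powerset_insert hi, mul_sum]
        congr 1
        refine sum_congr rfl fun t ht => ?_
        rw [walshMonomial_insert (hi' t ht)]
        ring
      have hflip : ∀ (b : Finset V → ℝ) (y : V → ZMod 2),
          ∑ t ∈ s.powerset, b t * walshMonomial t (y + Pi.single i 1) =
            ∑ t ∈ s.powerset, b t * walshMonomial t y := fun b y =>
        sum_congr rfl fun t ht => by rw [walshMonomial_add_single (hi' t ht)]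
      refine (sum_pow_two_mul_le_of_eq_add i hF (hflip a) (hflip _) hk (by positivity)
        (by positivity) (by positivity) hg hh).trans_eq ?_
      rw [sum_powerset_insert hi]
      ring

theorem ZeroSumFreeUpTo.sum_pow_sum_walsh_le {W : Type*} [Fintype W] [DecidableEq W] {k d : ℕ}
    (hk : 0 < k) {Λ : Finset (W → ZMod 2)} (hΛ : ZeroSumFreeUpTo (2 * k * d) Λ)
    {𝒮 : Finset (Finset (W → ZMod 2))} (h𝒮 : ∀ t ∈ 𝒮, t ⊆ Λ ∧ t.card ≤ d)
    (σ : Finset (W → ZMod 2) → ℝ) :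
    ∑ x, (∑ t ∈ 𝒮, σ t * walsh (∑ l ∈ t, l) x) ^ (2 * k) ≤
      2 ^ Fintype.card W * ((2 * k) ^ d * ∑ t ∈ 𝒮, σ t ^ 2) ^ k := by
  have htransfer := sum_pow_sum_walsh_eq_of_iff σ (T := 𝒮) (m := 2 * k)
    (v := fun t => ∑ l ∈ t, l) (v' := fun t l => if l ∈ t then 1 else 0) fun c hc => by
      have hc : ∀ i, c i ∈ 𝒮 := Fintype.mem_piFinset.mp hc
      refine hΛ.sum_sum_eq_zero_iff univ c (fun i _ => (h𝒮 _ (hc i)).1) ?_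
      calc ((∑ i, (c i).card : ℕ) : ℝ) ≤ ((∑ _i : Fin (2 * k), d : ℕ) : ℝ) :=
            Nat.cast_le.mpr (sum_le_sum fun i _ => (h𝒮 _ (hc i)).2)
        _ = 2 * k * d := by simp
  have hchaos := sum_pow_sum_walshMonomial_le hk univ d (fun t => if t ∈ 𝒮 then σ t else 0)
    fun t _ ht => (h𝒮 t (by by_contra h; simp [h] at ht)).2
  simp_rw [powerset_univ, ite_mul, zero_mul, ite_pow, zero_pow two_ne_zero, sum_ite_mem,
    univ_inter, walshMonomial_eq_walsh] at hchaos
  refine le_of_mul_le_mul_left ?_ (by positivity : (0 : ℝ) < 2 ^ Fintype.card (W → ZMod 2))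
  rw [htransfer]
  calc _ ≤ 2 ^ Fintype.card W *
        (2 ^ Fintype.card (W → ZMod 2) * ((2 * k) ^ d * ∑ t ∈ 𝒮, σ t ^ 2) ^ k) := by
        gcongr
    _ = _ := by ring

lemma pow_sum_le_card_pow_mul_sum_pow_two_mul {ι : Type*} (s : Finset ι) (f : ι → ℝ) {k : ℕ}
    (hk : 0 < k) :
    (∑ i ∈ s, f i) ^ (2 * k) ≤ (s.card : ℝ) ^ (2 * k - 1) * ∑ i ∈ s, f i ^ (2 * k) := by
  have h := pow_sum_le_card_mul_sum_pow (s := s) (f := fun i => |f i|) (fun i _ => abs_nonneg _)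
    (2 * k - 1)
  rw [Nat.sub_add_cancel (by omega)] at h
  simp_rw [(even_two_mul k).pow_abs] at h
  calc _ = |∑ i ∈ s, f i| ^ (2 * k) := ((even_two_mul k).pow_abs _).symm
    _ ≤ (∑ i ∈ s, |f i|) ^ (2 * k) := pow_le_pow_left₀ (abs_nonneg _) (abs_sum_le_sum_abs _ _) _
    _ ≤ _ := h

lemma le_of_pow_two_mul_le {α δ N K c t : ℝ} {k : ℕ} (hk : 0 < k) (hα : 0 < α) (hδ : 0 < δ)
    (hN : 0 < N) (hK : 0 ≤ K) (hc : 0 ≤ c) (hδc : 1 / δ ≤ c ^ k) (ht : 0 ≤ t)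
    (h : (α * N * t) ^ (2 * k) ≤ (δ * N) ^ (2 * k - 1) * (N * (K * t) ^ k)) :
    t ≤ (δ / α) ^ 2 * K * c := by
  have htk : t ^ k * δ ≤ ((δ / α) ^ 2 * K) ^ k := by
    obtain ⟨m, rfl⟩ : ∃ m, k = m + 1 := ⟨k - 1, by omega⟩
    rw [show 2 * (m + 1) - 1 = 2 * m + 1 by omega] at h
    rcases ht.eq_or_lt with rfl | htpos
    · rw [zero_pow (by omega), zero_mul]
      positivity
    have e : ((δ / α) ^ 2 * K) ^ (m + 1) * α ^ (2 * (m + 1)) = δ ^ (2 * (m + 1)) * K ^ (m + 1) := by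
      rw [mul_pow, ← pow_mul, div_pow, pow_mul, pow_mul]
      field_simp
    refine le_of_mul_le_mul_right ?_
      (by positivity : 0 < α ^ (2 * (m + 1)) * N ^ (2 * (m + 1)) * t ^ (m + 1))
    calc _ = δ * (α * N * t) ^ (2 * (m + 1)) := by ring
      _ ≤ δ * ((δ * N) ^ (2 * m + 1) * (N * (K * t) ^ (m + 1))) := by gcongr
      _ = _ := by linear_combination (N ^ (2 * (m + 1)) * t ^ (m + 1)) * e.symm
  refine le_of_pow_le_pow_left₀ hk.ne' (by positivity) ?_
  calc t ^ k ≤ ((δ / α) ^ 2 * K) ^ k * (1 / δ) := by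
        rw [← div_eq_mul_one_div, le_div_iff₀ hδ]
        exact htk
    _ ≤ ((δ / α) ^ 2 * K) ^ k * c ^ k := by gcongr
    _ = _ := (mul_pow _ _ _).symm

lemma exists_nat_mul_le_logb_and_one_div_le_four_pow {δ : ℝ} (hδ : 0 < δ) {d : ℕ} (hd : 0 < d)
    (hdδ : 2 * d ≤ Real.logb 2 (1 / δ)) :
    ∃ k : ℕ, 0 < k ∧ (k * d : ℝ) ≤ Real.logb 2 (1 / δ) ∧ 1 / δ ≤ 4 ^ (d * k) := by
  set L := Real.logb 2 (1 / δ)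
  have hd' : (0 : ℝ) < d := by exact_mod_cast hd
  have hk : 0 < ⌊L / d⌋₊ := Nat.floor_pos.mpr ((le_div_iff₀ hd').mpr (by linarith))
  refine ⟨⌊L / d⌋₊, hk, (le_div_iff₀ hd').mp (Nat.floor_le (div_nonneg (by linarith) hd'.le)), ?_⟩
  have h1 := (div_lt_iff₀ hd').mp (Nat.lt_floor_add_one (L / d))
  have h2 : (1 : ℝ) ≤ ⌊L / d⌋₊ := by exact_mod_cast hk
  rw [← Real.rpow_logb (by norm_num : (0 : ℝ) < 2) (by norm_num) (by positivity : 0 < 1 / δ)]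
  calc (2 : ℝ) ^ L ≤ 2 ^ ((2 * (d * ⌊L / d⌋₊) : ℕ) : ℝ) :=
        Real.rpow_le_rpow_of_exponent_le (by norm_num) (by push_cast; nlinarith)
    _ = 4 ^ (d * ⌊L / d⌋₊) := by rw [Real.rpow_natCast, pow_mul]; norm_num

theorem card_le_of_forall_le_abs_fourierF2 {n k d : ℕ} (hk : 0 < k) {α δ : ℝ} (hα : 0 < α)
    (hδ : 0 < δ) {A : Finset (Fin n → ZMod 2)} (hA : (A.card : ℝ) = δ * 2 ^ n)
    (hδk : 1 / δ ≤ 4 ^ (d * k)) {Λ : Finset (Fin n → ZMod 2)}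
    (hΛ : ZeroSumFreeUpTo (2 * k * d) Λ) {𝒮 : Finset (Finset (Fin n → ZMod 2))}
    (h𝒮 : ∀ t ∈ 𝒮, t ⊆ Λ ∧ t.card ≤ d ∧ α * 2 ^ n ≤ |fourierF2 A (∑ l ∈ t, l)|) :
    (𝒮.card : ℝ) ≤ (δ / α) ^ 2 * (2 * k) ^ d * 4 ^ d := by
  set σ : Finset (Fin n → ZMod 2) → ℝ := fun t => if 0 ≤ fourierF2 A (∑ l ∈ t, l) then 1 else -1
  set f : (Fin n → ZMod 2) → ℝ := fun x => ∑ t ∈ 𝒮, σ t * walsh (∑ l ∈ t, l) x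
  have hσ : ∀ t, σ t ^ 2 = 1 := fun t => by simp only [σ]; split_ifs <;> norm_num
  have hlower : α * 2 ^ n * 𝒮.card ≤ ∑ x ∈ A, f x :=
    calc α * 2 ^ n * 𝒮.card = ∑ _t ∈ 𝒮, α * 2 ^ n := by rw [sum_const, nsmul_eq_mul]; ring
      _ ≤ ∑ t ∈ 𝒮, |fourierF2 A (∑ l ∈ t, l)| := sum_le_sum fun t ht => (h𝒮 t ht).2.2
      _ = ∑ t ∈ 𝒮, σ t * fourierF2 A (∑ l ∈ t, l) := sum_congr rfl fun t _ => by
          simp only [σ]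
          split_ifs with h
          · rw [abs_of_nonneg h, one_mul]
          · rw [abs_of_neg (not_le.mp h), neg_one_mul]
      _ = ∑ x ∈ A, f x := by
          simp only [f, fourierF2, mul_sum]
          exact sum_comm
  have hmoment := hΛ.sum_pow_sum_walsh_le hk (fun t ht => ⟨(h𝒮 t ht).1, (h𝒮 t ht).2.1⟩) σ
  simp only [hσ, sum_const, nsmul_eq_mul, mul_one, Fintype.card_fin] at hmoment
  refine le_of_pow_two_mul_le (N := 2 ^ n) hk hα hδ (by positivity) (by positivity)
    (by positivity) (by rwa [← pow_mul]) (Nat.cast_nonneg _) ?_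
  calc (α * 2 ^ n * 𝒮.card) ^ (2 * k) ≤ (∑ x ∈ A, f x) ^ (2 * k) :=
        pow_le_pow_left₀ (by positivity) hlower _
    _ ≤ (A.card : ℝ) ^ (2 * k - 1) * ∑ x ∈ A, f x ^ (2 * k) :=
        pow_sum_le_card_pow_mul_sum_pow_two_mul _ _ hk
    _ ≤ (δ * 2 ^ n) ^ (2 * k - 1) * ∑ x, f x ^ (2 * k) := by
        rw [hA]
        gcongr
        exacts [fun x _ _ => (even_two_mul k).pow_nonneg (f x), subset_univ A]
    _ ≤ _ := by gcongr

theorem card_dDot_inter_le_card_filter {G : Type*} [AddCommGroup G] [DecidableEq G] (d : ℕ)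
    (Λ R : Finset G) :
    (dDot d Λ ∩ R).card ≤ ((Λ.powersetCard d).filter fun t => ∑ x ∈ t, x ∈ R).card := by
  refine (card_le_card fun r hr => ?_).trans (card_image_le (f := fun t => ∑ x ∈ t, x))
  obtain ⟨hrd, hrR⟩ := mem_inter.mp hr
  obtain ⟨t, ht, rfl⟩ := mem_image.mp hrd
  exact mem_image_of_mem _ (mem_filter.mpr ⟨ht, hrR⟩)

theorem stmt5_general {n : ℕ} (δ α : ℝ) (hα : 0 < α) (hαδ : α ≤ δ)
    (d : ℕ) (hd : 1 ≤ d) (hd2 : (d : ℝ) ≤ Real.logb 2 (1 / δ) / 4)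
    (A : Finset (Fin n → ZMod 2)) (hA : (A.card : ℝ) = δ * 2 ^ n)
    (Λ : Finset (Fin n → ZMod 2))
    (hΛ : ∀ S ⊆ Λ, S.Nonempty → (S.card : ℝ) ≤ 2 * Real.logb 2 (1 / δ) →
      ∑ x ∈ S, x ≠ 0) :
    (((dDot d Λ) ∩ specLarge A α).card : ℝ) ≤
      (δ / α) ^ 2 * (2 ^ 12 * Real.logb 2 (1 / δ) / d) ^ d := by
  have hδ0 : 0 < δ := hα.trans_le hαδ
  obtain ⟨k, hk, hkd, hδk⟩ := exists_nat_mul_le_logb_and_one_div_le_four_pow hδ0 hd (by linarith)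
  have h𝒮 := card_le_of_forall_le_abs_fourierF2 hk hα hδ0 hA hδk
    (ZeroSumFreeUpTo.mono hΛ (by linarith))
    (𝒮 := (Λ.powersetCard d).filter fun t => ∑ x ∈ t, x ∈ specLarge A α) fun t ht => by
      obtain ⟨ht, hR⟩ := mem_filter.mp ht
      obtain ⟨htΛ, htd⟩ := mem_powersetCard.mp ht
      exact ⟨htΛ, htd.le, (mem_filter.mp hR).2⟩
  calc ((dDot d Λ ∩ specLarge A α).card : ℝ)
      ≤ ((Λ.powersetCard d).filter fun t => ∑ x ∈ t, x ∈ specLarge A α).card := by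
        exact_mod_cast card_dDot_inter_le_card_filter d Λ _
    _ ≤ (δ / α) ^ 2 * (2 * k) ^ d * 4 ^ d := h𝒮
    _ = (δ / α) ^ 2 * (8 * k) ^ d := by rw [mul_assoc, ← mul_pow]; ring
    _ ≤ _ := by
        have hd0 : (0 : ℝ) < d := by exact_mod_cast hd
        gcongr
        rw [le_div_iff₀ hd0]
        nlinarith

theorem stmt5 {n : ℕ} (δ α : ℝ) (hα : 0 < α) (hαδ : α ≤ δ) (hδ : δ ≤ 1 / 4)
    (d : ℕ) (hd : 1 ≤ d) (hd2 : (d : ℝ) ≤ Real.logb 2 (1 / δ) / 4)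
    (A : Finset (Fin n → ZMod 2)) (hA : (A.card : ℝ) = δ * 2 ^ n)
    (Λ : Finset (Fin n → ZMod 2))
    (hΛ : ∀ S ⊆ Λ, S.Nonempty → (S.card : ℝ) ≤ 2 * Real.logb 2 (1 / δ) →
      ∑ x ∈ S, x ≠ 0) :
    (((dDot d Λ) ∩ specLarge A α).card : ℝ) ≤
      (δ / α) ^ 2 * (2 ^ 12 * Real.logb 2 (1 / δ) / d) ^ d :=
  stmt5_general δ α hα hαδ d hd hd2 A hA Λ hΛ
end Hypercontractivity
end

section
/- Let n' ≥ 32 be an integer, let A' = { x ∈ F_2^{n'} : the number of coordinates of x equal to 1 is at least n'/2 }, and let r ∈ F_2^{n'} have Hamming weight 1. Then |Â'(r)| = Σ_{s=⌈n'/2⌉}^{n'} ((2s−n')/n') · C(n',s) ≥ 2^{−14} · 2^{n'}/√{n'}, where C(n',s) is the binomial coefficient. -/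
/-!
For `r = e_j` we have `Â(r) = ∑_{x ∈ A} (-1)^{x_j}`. Pairing `x` with `x + e_j`, the two terms
cancel unless `x_j = 0` and `x` has weight exactly `⌈n/2⌉ - 1`, so `Â(r) = -C(n-1, ⌈n/2⌉-1)`.
The sum telescopes to the same binomial coefficient, because
`(2s - n)/n · C(n,s) = C(n-1,s-1) - C(n-1,s)`. Finally `C(n-1, ⌈n/2⌉-1)` is a central binomial
coefficient or half of one, and `16^k ≤ (4k+1) C(2k,k)^2` yields `C(n-1, ⌈n/2⌉-1) ≥ 2^n / (4 √n)`.
-/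

open Finset

theorem sum_powerset_insert_ite_sign {α : Type*} [DecidableEq α] {s : Finset α} {a : α}
    (ha : a ∉ s) (k : ℕ) :
    ∑ t ∈ (insert a s).powerset, (if k + 1 ≤ #t then (if a ∈ t then (-1 : ℝ) else 1) else 0) =
      -((#s).choose k : ℝ) := by
  have hnot : ∀ t ∈ s.powerset, a ∉ t := fun t ht h ↦ ha (mem_powerset.1 ht h)
  rw [sum_powerset_insert ha, ← sum_add_distrib]
  calc ∑ t ∈ s.powerset, ((if k + 1 ≤ #t then (if a ∈ t then (-1 : ℝ) else 1) else 0) +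
        (if k + 1 ≤ #(insert a t) then (if a ∈ insert a t then (-1 : ℝ) else 1) else 0))
      = ∑ t ∈ s.powerset, -(if #t = k then (1 : ℝ) else 0) := by
        refine sum_congr rfl fun t ht ↦ ?_
        rw [card_insert_of_notMem (hnot t ht), if_pos (mem_insert_self a t), if_neg (hnot t ht)]
        split_ifs <;> first | omega | norm_num
    _ = -((#s).choose k : ℝ) := by
        rw [sum_neg_distrib, sum_boole, ← powersetCard_eq_filter, card_powersetCard]

def zmodTwoFunEquivFinset (ι : Type*) [Fintype ι] [DecidableEq ι] : (ι → ZMod 2) ≃ Finset ι where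
  toFun x := {i | x i = 1}
  invFun s i := if i ∈ s then 1 else 0
  left_inv x := funext fun i ↦ by
    have : ∀ a : ZMod 2, (if a = 1 then 1 else 0) = a := by decide
    simpa using this (x i)
  right_inv s := by ext i; by_cases h : i ∈ s <;> simp [h]

theorem neg_one_pow_val_zmodTwo (a : ZMod 2) : (-1 : ℝ) ^ a.val = if a = 1 then -1 else 1 := by
  obtain rfl | rfl : a = 0 ∨ a = 1 := by revert a; decide
  · simp
  · simp [ZMod.val_one]

theorem sum_mul_eq_apply_of_filter_eq_singleton {ι : Type*} [Fintype ι] [DecidableEq ι]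
    {r : ι → ZMod 2} {j : ι} (hr : ({i | r i = 1} : Finset ι) = {j}) (x : ι → ZMod 2) :
    ∑ i, r i * x i = x j := by
  have hr' : ∀ i, r i = if i = j then 1 else 0 := by
    intro i
    have h : r i = 1 ↔ i = j := by simpa using Finset.ext_iff.mp hr i
    have : ∀ a : ZMod 2, a ≠ 1 → a = 0 := by decide
    by_cases hij : i = j
    · simpa [hij] using h
    · simpa [hij] using this _ (h.not.2 hij)
  simp [hr']

theorem fourierF2_weight_ge {n : ℕ} (k : ℕ) {r : Fin n → ZMod 2} {j : Fin n}
    (hr : ({i | r i = 1} : Finset (Fin n)) = {j}) :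
    fourierF2 {x | k + 1 ≤ #{i | x i = 1}} r = -((n - 1).choose k : ℝ) := by
  have hsum := sum_powerset_insert_ite_sign (notMem_erase j (univ : Finset (Fin n))) k
  rw [insert_erase (mem_univ j), powerset_univ, card_erase_of_mem (mem_univ j), card_fin] at hsum
  rw [← hsum, fourierF2, sum_filter]
  refine Fintype.sum_equiv (zmodTwoFunEquivFinset (Fin n)) _ _ fun x ↦ ?_
  simp [zmodTwoFunEquivFinset, sum_mul_eq_apply_of_filter_eq_singleton hr, neg_one_pow_val_zmodTwo]

theorem two_mul_sub_mul_choose_succ (N t : ℕ) :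
    (2 * (t + 1 : ℝ) - (N + 1)) * (N + 1).choose (t + 1) =
      (N + 1) * (N.choose t - N.choose (t + 1)) := by
  have hmul : ((N + 1 : ℕ) : ℝ) * N.choose t = (N + 1).choose (t + 1) * (t + 1 : ℕ) := by
    exact_mod_cast Nat.add_one_mul_choose_eq N t
  have hpascal : ((N + 1).choose (t + 1) : ℝ) = N.choose t + N.choose (t + 1) := by
    exact_mod_cast Nat.choose_succ_succ N t
  push_cast at hmul
  linear_combination -2 * hmul - (N + 1 : ℝ) * hpascal

theorem sum_Icc_two_mul_sub_div_mul_choose {n k : ℕ} (hk : k < n) :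
    ∑ s ∈ Icc (k + 1) n, ((2 * (s : ℝ) - n) / n) * n.choose s = (n - 1).choose k := by
  obtain ⟨N, rfl⟩ : ∃ N, n = N + 1 := ⟨n - 1, by omega⟩
  set g : ℕ → ℝ := fun s ↦ -(N.choose (s - 1) : ℝ)
  have hterm : ∀ s ∈ Icc (k + 1) (N + 1),
      ((2 * (s : ℝ) - (N + 1 : ℕ)) / (N + 1 : ℕ)) * (N + 1).choose s = g (s + 1) - g s := by
    intro s hs
    obtain ⟨t, rfl⟩ : ∃ t, s = t + 1 := ⟨s - 1, by grind⟩
    push_cast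
    rw [div_mul_eq_mul_div, two_mul_sub_mul_choose_succ, mul_div_cancel_left₀ _ (by positivity)]
    simp only [g, add_tsub_cancel_right]
    ring
  rw [sum_congr rfl hterm, sum_Icc_sub (by omega)]
  simp [g]

theorem sixteen_pow_le_mul_centralBinom_sq (k : ℕ) : 16 ^ k ≤ (4 * k + 1) * k.centralBinom ^ 2 := by
  induction k with
  | zero => simp
  | succ k ih =>
    have hrec := Nat.succ_mul_centralBinom_succ k
    have hsq : (k + 1) ^ 2 * (k + 1).centralBinom ^ 2 = (2 * (2 * k + 1)) ^ 2 * k.centralBinom ^ 2 := by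
      rw [← mul_pow, hrec, mul_pow]
    have hpoly : 16 * (4 * k + 1) * (k + 1) ^ 2 ≤ (4 * (k + 1) + 1) * (2 * (2 * k + 1)) ^ 2 := by
      ring_nf; nlinarith
    refine Nat.le_of_mul_le_mul_right ?_ (show 0 < (k + 1) ^ 2 by positivity)
    calc 16 ^ (k + 1) * (k + 1) ^ 2 ≤ 16 * ((4 * k + 1) * k.centralBinom ^ 2) * (k + 1) ^ 2 := by
          rw [pow_succ']; gcongr
      _ = 16 * (4 * k + 1) * (k + 1) ^ 2 * k.centralBinom ^ 2 := by ring
      _ ≤ (4 * (k + 1) + 1) * (2 * (2 * k + 1)) ^ 2 * k.centralBinom ^ 2 := by gcongr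
      _ = (4 * (k + 1) + 1) * (k + 1).centralBinom ^ 2 * (k + 1) ^ 2 := by rw [mul_assoc, ← hsq]; ring

theorem four_pow_le_mul_choose_half_sq (N : ℕ) : 4 ^ N ≤ 4 * (N + 1) * N.choose (N / 2) ^ 2 := by
  obtain ⟨K, rfl | rfl⟩ := Nat.even_or_odd' N
  · have h := sixteen_pow_le_mul_centralBinom_sq K
    rw [show 2 * K / 2 = K by omega, ← Nat.centralBinom_eq_two_mul_choose, pow_mul]
    calc (4 ^ 2) ^ K ≤ (4 * K + 1) * K.centralBinom ^ 2 := h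
      _ ≤ 4 * (2 * K + 1) * K.centralBinom ^ 2 := by gcongr; omega
  · have h := sixteen_pow_le_mul_centralBinom_sq (K + 1)
    have hc : (K + 1).centralBinom = 2 * (2 * K + 1).choose K := by
      rw [Nat.centralBinom_eq_two_mul_choose, show 2 * (K + 1) = 2 * K + 1 + 1 by ring,
        Nat.choose_succ_succ, Nat.choose_symm_half]; ring
    rw [show (2 * K + 1) / 2 = K by omega]
    rw [hc, show 16 ^ (K + 1) = 4 * 4 ^ (2 * K + 1) by rw [pow_succ, pow_succ, pow_mul]; ring] at h
    calc 4 ^ (2 * K + 1) ≤ (4 * (K + 1) + 1) * (2 * K + 1).choose K ^ 2 := by linarith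
      _ ≤ 4 * (2 * K + 1 + 1) * (2 * K + 1).choose K ^ 2 := by gcongr; omega

theorem two_pow_le_mul_sqrt_mul_choose_half (N : ℕ) :
    (2 : ℝ) ^ N ≤ 2 * √(N + 1) * N.choose (N / 2) := by
  refine le_of_pow_le_pow_left₀ two_ne_zero (by positivity) ?_
  rw [mul_pow, mul_pow, Real.sq_sqrt (by positivity), ← pow_mul, pow_mul']
  norm_num
  exact_mod_cast four_pow_le_mul_choose_half_sq N

theorem natCeil_natCast_succ_div_two (N : ℕ) : ⌈((N + 1 : ℕ) : ℝ) / 2⌉₊ = N / 2 + 1 := by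
  have h1 : ((2 * (N / 2) : ℕ) : ℝ) ≤ N := by exact_mod_cast Nat.mul_div_le N 2
  have h2 : ((N + 1 : ℕ) : ℝ) ≤ (2 * (N / 2 + 1) : ℕ) := by exact_mod_cast (by omega)
  rw [Nat.ceil_eq_iff (by omega)]
  push_cast at h1 h2 ⊢
  constructor <;> linarith

theorem stmt7_general {n' : ℕ}
    (A' : Finset (Fin n' → ZMod 2))
    (hA' : A' = Finset.univ.filter fun x : Fin n' → ZMod 2 =>
      (n' : ℝ) / 2 ≤ ((Finset.univ.filter fun i => x i = 1).card : ℝ))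
    (r : Fin n' → ZMod 2)
    (hr : (Finset.univ.filter fun i => r i = 1).card = 1) :
    |fourierF2 A' r| =
        ∑ s ∈ Finset.Icc ⌈(n' : ℝ) / 2⌉₊ n',
          ((2 * (s : ℝ) - n') / n') * (n'.choose s : ℝ) ∧
      (2 : ℝ) ^ (-14 : ℤ) * 2 ^ n' / Real.sqrt n' ≤
        ∑ s ∈ Finset.Icc ⌈(n' : ℝ) / 2⌉₊ n',
          ((2 * (s : ℝ) - n') / n') * (n'.choose s : ℝ) := by
  obtain ⟨j, hj⟩ := card_eq_one.mp hr
  obtain ⟨N, rfl⟩ : ∃ N, n' = N + 1 := Nat.exists_eq_add_one.2 (Fin.pos j)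
  have hA : A' = ({x | N / 2 + 1 ≤ #{i | x i = 1}} : Finset (Fin (N + 1) → ZMod 2)) := by
    rw [hA', ← natCeil_natCast_succ_div_two]
    simp only [Nat.ceil_le]
  rw [natCeil_natCast_succ_div_two, sum_Icc_two_mul_sub_div_mul_choose (by omega), hA,
    fourierF2_weight_ge _ hj, abs_neg, Nat.abs_cast, Nat.add_sub_cancel]
  refine ⟨rfl, ?_⟩
  have hsqrt : 0 < √((N + 1 : ℕ) : ℝ) := by positivity
  have hbound := two_pow_le_mul_sqrt_mul_choose_half N
  push_cast at hsqrt ⊢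
  have hprod : 0 ≤ √((N : ℝ) + 1) * (N.choose (N / 2) : ℝ) := by positivity
  rw [div_le_iff₀ hsqrt, zpow_neg, pow_succ]
  linarith

theorem stmt7 {n' : ℕ} (hn' : 32 ≤ n')
    (A' : Finset (Fin n' → ZMod 2))
    (hA' : A' = Finset.univ.filter fun x : Fin n' → ZMod 2 =>
      (n' : ℝ) / 2 ≤ ((Finset.univ.filter fun i => x i = 1).card : ℝ))
    (r : Fin n' → ZMod 2)
    (hr : (Finset.univ.filter fun i => r i = 1).card = 1) :
    |fourierF2 A' r| =
        ∑ s ∈ Finset.Icc ⌈(n' : ℝ) / 2⌉₊ n',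
          ((2 * (s : ℝ) - n') / n') * (n'.choose s : ℝ) ∧
      (2 : ℝ) ^ (-14 : ℤ) * 2 ^ n' / Real.sqrt n' ≤
        ∑ s ∈ Finset.Icc ⌈(n' : ℝ) / 2⌉₊ n',
          ((2 * (s : ℝ) - n') / n') * (n'.choose s : ℝ) :=
  stmt7_general A' hA' r hr
end

section
/- Let p be a positive integer, let Λ ⊆ F_2^n belong to the family 𝚲(2p), and let E_1, …, E_{2p} be subsets of Λ. Then the number of solutions of λ_1 + ⋯ + λ_{2p} = 0 with λ_i ∈ E_i (i = 1,…,2p) is at most 2^{2p} · p! · Π_{i=1}^{2p} |E_i|^{1/2}. -/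
open Finset

section Aux

variable {G : Type*} [AddCommGroup G] [DecidableEq G]

lemma exists_partner (p : ℕ) (Λ : Finset G) (hG : ∀ x : G, x + x = 0)
    (hΛ : InLambdaFamily (2 * p) Λ) (E : Fin (2 * p) → Finset G) (hE : ∀ i, E i ⊆ Λ)
    (A : Finset (Fin (2 * p))) (lam : Fin (2 * p) → G)
    (hlam : ∀ i ∈ A, lam i ∈ E i) (hsum : ∑ i ∈ A, lam i = 0)
    (a : Fin (2 * p)) (ha : a ∈ A) : ∃ j ∈ A.erase a, lam j = lam a := by
  classical
  set c : G → ℕ := fun g => (A.filter fun i => lam i = g).card with hc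
  set S : Finset G := (A.image lam).filter fun g => ¬ Even (c g) with hSdef
  have h1 : ∑ g ∈ A.image lam, c g • g = ∑ i ∈ A, lam i := by
    rw [← Finset.sum_fiberwise_of_maps_to (fun x hx => Finset.mem_image_of_mem lam hx) lam]
    refine Finset.sum_congr rfl fun g hg => ?_
    rw [Finset.sum_congr rfl (fun i hi => (Finset.mem_filter.mp hi).2), Finset.sum_const]
  have hdrop : ∀ g ∈ A.image lam, c g • g ≠ 0 → ¬ Even (c g) := by
    intro g _ hne heven
    obtain ⟨k, hk⟩ := heven
    exact hne (by rw [hk, add_nsmul]; exact hG _)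
  have h2 : ∑ g ∈ S, g = ∑ g ∈ A.image lam, c g • g := by
    rw [hSdef, ← Finset.sum_filter_of_ne (p := fun g => ¬ Even (c g)) hdrop]
    refine Finset.sum_congr rfl fun g hg => ?_
    have hodd : Odd (c g) := Nat.not_even_iff_odd.mp (Finset.mem_filter.mp hg).2
    obtain ⟨k, hk⟩ := hodd
    have h2k : (2 * k) • g = 0 := by
      rw [two_mul, add_nsmul]; exact hG _
    rw [hk, add_nsmul, h2k, zero_add, one_nsmul]
  have hS0 : ∑ g ∈ S, g = 0 := by rw [h2, h1, hsum]
  have hSempty : S = ∅ := by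
    by_contra h
    refine hΛ S ?_ (Finset.nonempty_iff_ne_empty.mpr h) ?_ hS0
    · intro g hg
      obtain ⟨i, hi, rfl⟩ := Finset.mem_image.mp (Finset.mem_filter.mp hg).1
      exact hE i (hlam i hi)
    · calc S.card ≤ (A.image lam).card := Finset.card_filter_le _ _
        _ ≤ A.card := Finset.card_image_le
        _ ≤ Fintype.card (Fin (2 * p)) := Finset.card_le_univ A
        _ = 2 * p := Fintype.card_fin _
  have heven : Even (c (lam a)) := by
    by_contra h
    have : lam a ∈ S := Finset.mem_filter.mpr ⟨Finset.mem_image_of_mem lam ha, h⟩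
    rw [hSempty] at this
    exact absurd this (Finset.notMem_empty _)
  have h1le : a ∈ A.filter fun i => lam i = lam a := Finset.mem_filter.mpr ⟨ha, rfl⟩
  have hpos : 0 < c (lam a) := Finset.card_pos.mpr ⟨a, h1le⟩
  have hlt : 1 < c (lam a) := by
    rcases heven with ⟨k, hk⟩
    omega
  obtain ⟨j, hj, hja⟩ := Finset.exists_mem_ne hlt a
  obtain ⟨hjA, hjval⟩ := Finset.mem_filter.mp hj
  exact ⟨j, Finset.mem_erase.mpr ⟨hja, hjA⟩, hjval⟩

lemma key (p : ℕ) (Λ : Finset G) (hG : ∀ x : G, x + x = 0)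
    (hΛ : InLambdaFamily (2 * p) Λ) (E : Fin (2 * p) → Finset G) (hE : ∀ i, E i ⊆ Λ) :
    ∀ (m : ℕ) (A : Finset (Fin (2 * p))), A.card = 2 * m →
      (((Fintype.piFinset fun i => if i ∈ A then E i else {0}).filter
          fun lam => ∑ i ∈ A, lam i = 0).card : ℝ) ≤
        4 ^ m * (m.factorial : ℝ) * ∏ i ∈ A, Real.sqrt ((E i).card : ℝ) := by
  classical
  intro m
  induction m with
  | zero =>
    intro A hA
    have hAe : A = ∅ := Finset.card_eq_zero.mp (by omega)
    subst hAe
    simp only [Finset.notMem_empty, if_false, Finset.prod_empty, pow_zero,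
      Nat.factorial_zero, Nat.cast_one, mul_one, one_mul]
    have : ((Fintype.piFinset fun _ : Fin (2 * p) => ({0} : Finset G)).filter
        fun lam => ∑ i ∈ (∅ : Finset (Fin (2 * p))), lam i = 0).card ≤ 1 := by
      calc _ ≤ (Fintype.piFinset fun _ : Fin (2 * p) => ({0} : Finset G)).card :=
            Finset.card_filter_le _ _
        _ = 1 := by simp
    exact_mod_cast this
  | succ m ih =>
    intro A hA
    have hAne : A.Nonempty := Finset.card_pos.mp (by omega)
    obtain ⟨a, ha⟩ := hAne
    set Sol : Finset (Fin (2 * p)) → Finset (Fin (2 * p) → G) := fun B =>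
      (Fintype.piFinset fun i => if i ∈ B then E i else {0}).filter
        fun lam => ∑ i ∈ B, lam i = 0 with hSol
    set A1 := A.erase a with hA1
    -- chosen partner
    set jc : (Fin (2 * p) → G) → Fin (2 * p) := fun lam =>
      if h : ∃ j ∈ A1, lam j = lam a then h.choose else a with hjc
    have hmemE : ∀ lam ∈ Sol A, ∀ i ∈ A, lam i ∈ E i := by
      intro lam hlam i hi
      have := Fintype.mem_piFinset.mp (Finset.mem_filter.mp hlam).1 i
      rwa [if_pos hi] at this
    have hzero : ∀ lam ∈ Sol A, ∀ i, i ∉ A → lam i = 0 := by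
      intro lam hlam i hi
      have := Fintype.mem_piFinset.mp (Finset.mem_filter.mp hlam).1 i
      rw [if_neg hi] at this
      exact Finset.mem_singleton.mp this
    have hex : ∀ lam ∈ Sol A, ∃ j ∈ A1, lam j = lam a := by
      intro lam hlam
      exact exists_partner p Λ hG hΛ E hE A lam (hmemE lam hlam)
        (Finset.mem_filter.mp hlam).2 a ha
    have hjcmem : ∀ lam ∈ Sol A, jc lam ∈ A1 ∧ lam (jc lam) = lam a := by
      intro lam hlam
      have h := hex lam hlam
      rw [hjc]
      simp only [dif_pos h]
      exact ⟨h.choose_spec.1, h.choose_spec.2⟩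
    -- target
    set T : Finset (Fin (2 * p) × G × (Fin (2 * p) → G)) := A1.biUnion fun j =>
      {j} ×ˢ (E a ∩ E j) ×ˢ Sol (A1.erase j) with hT
    set F : (Fin (2 * p) → G) → Fin (2 * p) × G × (Fin (2 * p) → G) := fun lam =>
      (jc lam, lam a, Function.update (Function.update lam a 0) (jc lam) 0) with hF
    have hmapsto : ∀ lam ∈ Sol A, F lam ∈ T := by
      intro lam hlam
      simp only [hF, hT]
      obtain ⟨hjm, hjv⟩ := hjcmem lam hlam
      obtain ⟨hja, hjA⟩ := Finset.mem_erase.mp hjm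
      refine Finset.mem_biUnion.mpr ⟨jc lam, hjm, ?_⟩
      refine Finset.mem_product.mpr ⟨Finset.mem_singleton_self _, Finset.mem_product.mpr ⟨?_, ?_⟩⟩
      · dsimp only
        refine Finset.mem_inter.mpr ⟨hmemE lam hlam a ha, ?_⟩
        rw [← hjv]; exact hmemE lam hlam _ hjA
      · -- membership in Sol (A1.erase (jc lam))
        dsimp only
        refine Finset.mem_filter.mpr ⟨Fintype.mem_piFinset.mpr fun i => ?_, ?_⟩
        · by_cases hi : i ∈ (A1.erase (jc lam))
          · rw [if_pos hi]
            obtain ⟨hij, hiA1⟩ := Finset.mem_erase.mp hi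
            obtain ⟨hia, hiA⟩ := Finset.mem_erase.mp hiA1
            rw [Function.update_of_ne hij, Function.update_of_ne hia]
            exact hmemE lam hlam i hiA
          · rw [if_neg hi, Finset.mem_singleton]
            by_cases hij : i = jc lam
            · subst hij; rw [Function.update_self]
            · rw [Function.update_of_ne hij]
              by_cases hia : i = a
              · subst hia; rw [Function.update_self]
              · rw [Function.update_of_ne hia]
                refine hzero lam hlam i fun hiA => hi ?_
                exact Finset.mem_erase.mpr ⟨hij, Finset.mem_erase.mpr ⟨hia, hiA⟩⟩
        · have hsumA : ∑ i ∈ A, lam i = 0 := (Finset.mem_filter.mp hlam).2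
          have e1 : lam a + ∑ i ∈ A1, lam i = ∑ i ∈ A, lam i :=
            Finset.add_sum_erase A lam ha
          have e2 : lam (jc lam) + ∑ i ∈ A1.erase (jc lam), lam i = ∑ i ∈ A1, lam i :=
            Finset.add_sum_erase A1 lam hjm
          have e3 : ∑ i ∈ A1.erase (jc lam),
              Function.update (Function.update lam a 0) (jc lam) 0 i
              = ∑ i ∈ A1.erase (jc lam), lam i := by
            refine Finset.sum_congr rfl fun i hi => ?_
            obtain ⟨hij, hiA1⟩ := Finset.mem_erase.mp hi
            obtain ⟨hia, _⟩ := Finset.mem_erase.mp hiA1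
            rw [Function.update_of_ne hij, Function.update_of_ne hia]
          rw [e3]
          have : lam a + (lam (jc lam) + ∑ i ∈ A1.erase (jc lam), lam i) = 0 := by
            rw [e2, e1, hsumA]
          rw [hjv, ← add_assoc, hG (lam a), zero_add] at this
          exact this
    have hinj : Set.InjOn F (Sol A : Set (Fin (2 * p) → G)) := by
      intro lam1 h1 lam2 h2 heq
      simp only [hF] at heq
      have h1' := Finset.mem_coe.mp h1
      have h2' := Finset.mem_coe.mp h2
      obtain ⟨hj1m, hj1v⟩ := hjcmem lam1 h1'
      obtain ⟨hj2m, hj2v⟩ := hjcmem lam2 h2'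
      have hjeq : jc lam1 = jc lam2 := congrArg Prod.fst heq
      have hveq : lam1 a = lam2 a := congrArg (fun x => x.2.1) heq
      have hmeq : Function.update (Function.update lam1 a 0) (jc lam1) 0
          = Function.update (Function.update lam2 a 0) (jc lam2) 0 :=
        congrArg (fun x => x.2.2) heq
      funext i
      by_cases hia : i = a
      · subst hia; exact hveq
      · by_cases hij : i = jc lam1
        · subst hij
          rw [hj1v, hjeq] at *
          rw [hveq, ← hj2v]
        · have := congrFun hmeq i
          rw [Function.update_of_ne hij, Function.update_of_ne hia,
            Function.update_of_ne (hjeq ▸ hij), Function.update_of_ne hia] at this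
          exact this
    have hcard : (Sol A).card ≤ ∑ j ∈ A1, (E a ∩ E j).card * (Sol (A1.erase j)).card := by
      calc (Sol A).card ≤ T.card := Finset.card_le_card_of_injOn F hmapsto hinj
        _ ≤ ∑ j ∈ A1, ({j} ×ˢ (E a ∩ E j) ×ˢ Sol (A1.erase j)).card := Finset.card_biUnion_le
        _ = ∑ j ∈ A1, (E a ∩ E j).card * (Sol (A1.erase j)).card := by
            refine Finset.sum_congr rfl fun j hj => ?_
            rw [Finset.card_product, Finset.card_product, Finset.card_singleton, one_mul]
    -- now the real-number estimates
    have hsqrt_nonneg : (0:ℝ) ≤ ∏ i ∈ A, Real.sqrt ((E i).card : ℝ) :=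
      Finset.prod_nonneg fun i _ => Real.sqrt_nonneg _
    have hbound : ∀ j ∈ A1, ((E a ∩ E j).card : ℝ) * ((Sol (A1.erase j)).card : ℝ) ≤
        4 ^ m * (m.factorial : ℝ) * ∏ i ∈ A, Real.sqrt ((E i).card : ℝ) := by
      intro j hj
      obtain ⟨hja, hjA⟩ := Finset.mem_erase.mp hj
      have hcardj : (A1.erase j).card = 2 * m := by
        rw [Finset.card_erase_of_mem hj, hA1, Finset.card_erase_of_mem ha, hA]
        omega
      have hIH := ih (A1.erase j) hcardj
      have hmin : ((E a ∩ E j).card : ℝ) ≤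
          Real.sqrt ((E a).card : ℝ) * Real.sqrt ((E j).card : ℝ) := by
        have h1 : (E a ∩ E j).card ≤ (E a).card := Finset.card_le_card Finset.inter_subset_left
        have h2 : (E a ∩ E j).card ≤ (E j).card := Finset.card_le_card Finset.inter_subset_right
        have hkey : (((E a ∩ E j).card : ℝ)) ^ 2 ≤ ((E a).card : ℝ) * ((E j).card : ℝ) := by
          rw [sq]
          exact mul_le_mul (by exact_mod_cast h1) (by exact_mod_cast h2)
            (Nat.cast_nonneg _) (Nat.cast_nonneg _)
        calc ((E a ∩ E j).card : ℝ)
            = Real.sqrt ((((E a ∩ E j).card : ℝ)) ^ 2) := (Real.sqrt_sq (Nat.cast_nonneg _)).symm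
          _ ≤ Real.sqrt (((E a).card : ℝ) * ((E j).card : ℝ)) := Real.sqrt_le_sqrt hkey
          _ = Real.sqrt ((E a).card : ℝ) * Real.sqrt ((E j).card : ℝ) :=
              Real.sqrt_mul (Nat.cast_nonneg _) _
      have hprodsplit : Real.sqrt ((E a).card : ℝ) * Real.sqrt ((E j).card : ℝ) *
          ∏ i ∈ A1.erase j, Real.sqrt ((E i).card : ℝ)
          = ∏ i ∈ A, Real.sqrt ((E i).card : ℝ) := by
        rw [mul_assoc, Finset.mul_prod_erase A1 (fun i => Real.sqrt ((E i).card : ℝ)) hj,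
          hA1, Finset.mul_prod_erase A (fun i => Real.sqrt ((E i).card : ℝ)) ha]
      calc ((E a ∩ E j).card : ℝ) * ((Sol (A1.erase j)).card : ℝ)
          ≤ (Real.sqrt ((E a).card : ℝ) * Real.sqrt ((E j).card : ℝ)) *
            (4 ^ m * (m.factorial : ℝ) * ∏ i ∈ A1.erase j, Real.sqrt ((E i).card : ℝ)) := by
            exact mul_le_mul hmin hIH (Nat.cast_nonneg _)
              (mul_nonneg (Real.sqrt_nonneg _) (Real.sqrt_nonneg _))
        _ = 4 ^ m * (m.factorial : ℝ) * ∏ i ∈ A, Real.sqrt ((E i).card : ℝ) := by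
            rw [← hprodsplit]; ring
    have hA1card : A1.card = 2 * m + 1 := by
      rw [hA1, Finset.card_erase_of_mem ha, hA]
      omega
    calc ((Sol A).card : ℝ)
        ≤ ∑ j ∈ A1, ((E a ∩ E j).card : ℝ) * ((Sol (A1.erase j)).card : ℝ) := by
          exact_mod_cast hcard
      _ ≤ ∑ j ∈ A1, (4 ^ m * (m.factorial : ℝ) * ∏ i ∈ A, Real.sqrt ((E i).card : ℝ)) :=
          Finset.sum_le_sum hbound
      _ = (2 * m + 1 : ℝ) * (4 ^ m * (m.factorial : ℝ) * ∏ i ∈ A, Real.sqrt ((E i).card : ℝ)) := by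
          rw [Finset.sum_const, hA1card]
          push_cast
          ring
      _ ≤ 4 ^ (m + 1) * ((m + 1).factorial : ℝ) * ∏ i ∈ A, Real.sqrt ((E i).card : ℝ) := by
          have h1 : (2 * (m:ℝ) + 1) ≤ 4 * (m + 1) := by nlinarith [Nat.cast_nonneg (α := ℝ) m]
          have h2 : ((m + 1).factorial : ℝ) = ((m:ℝ) + 1) * (m.factorial : ℝ) := by
            rw [Nat.factorial_succ]; push_cast; ring
          have hX : (0:ℝ) ≤ 4 ^ m * (m.factorial : ℝ) * ∏ i ∈ A, Real.sqrt ((E i).card : ℝ) :=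
            mul_nonneg (mul_nonneg (pow_nonneg (by norm_num) m) (Nat.cast_nonneg _)) hsqrt_nonneg
          calc (2 * (m:ℝ) + 1) * (4 ^ m * (m.factorial : ℝ) * ∏ i ∈ A, Real.sqrt ((E i).card : ℝ))
              ≤ (4 * ((m:ℝ) + 1)) * (4 ^ m * (m.factorial : ℝ) * ∏ i ∈ A, Real.sqrt ((E i).card : ℝ)) :=
                mul_le_mul_of_nonneg_right h1 hX
            _ = 4 ^ (m + 1) * (((m:ℝ) + 1) * (m.factorial : ℝ)) * ∏ i ∈ A, Real.sqrt ((E i).card : ℝ) := by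
                rw [pow_succ]; ring
            _ = 4 ^ (m + 1) * ((m + 1).factorial : ℝ) * ∏ i ∈ A, Real.sqrt ((E i).card : ℝ) := by
                rw [h2]

end Aux

theorem stmt11 {n : ℕ} (p : ℕ) (hp : 0 < p)
    (Λ : Finset (Fin n → ZMod 2)) (hΛ : InLambdaFamily (2 * p) Λ)
    (E : Fin (2 * p) → Finset (Fin n → ZMod 2)) (hE : ∀ i, E i ⊆ Λ) :
    ((((Fintype.piFinset fun i : Fin (2 * p) => E i).filter
        fun lam => ∑ i, lam i = 0).card : ℝ)) ≤
      2 ^ (2 * p) * (p.factorial : ℝ) * ∏ i, Real.sqrt ((E i).card : ℝ) := by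
  classical
  have hG : ∀ x : Fin n → ZMod 2, x + x = 0 := by
    intro x; funext i
    exact CharTwo.add_self_eq_zero (x i)
  have hkey := key p Λ hG hΛ E hE p Finset.univ (by simp [Fintype.card_fin])
  have hset : (Fintype.piFinset fun i : Fin (2 * p) =>
      if i ∈ (Finset.univ : Finset (Fin (2 * p))) then E i else {0}) =
      Fintype.piFinset fun i : Fin (2 * p) => E i := by
    congr 1; funext i; simp
  rw [hset] at hkey
  have h4 : (4 : ℝ) ^ p = 2 ^ (2 * p) := by
    rw [show (4:ℝ) = 2 ^ 2 by norm_num, ← pow_mul]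
  rw [h4] at hkey
  exact hkey
end

section
/- Let δ₀ > 0 be real and r, p positive integers with p ≥ 2δ₀ + 3 and r ≥ p − δ₀. Let t_1, …, t_r be natural numbers with t_j ≥ 2 for all j and Σ_{j=1}^r t_j = 2p. Set T = max_j t_j and α_i = |{ j ∈ [r] : t_j ≥ T − i }| for i = 0, 1, …, T−2. Let z ≥ 0 be such that Σ_{i=0}^{z−1} α_i ≤ p < Σ_{i=0}^{z} α_i, and set q_z = p − Σ_{i=0}^{z−1} α_i. Then π(t_1,…,t_r) := T^{α_0} (T−1)^{α_1} ⋯ (T−(z−1))^{α_{z−1}} (T−z)^{q_z} ≤ 2^{3p} · max{ δ₀^{4δ₀}, 1 }. -/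
set_option maxHeartbeats 1000000

open Finset

theorem stmt12 (δ₀ : ℝ) (hδ₀ : 0 < δ₀) (r p : ℕ)
    (hp : 2 * δ₀ + 3 ≤ (p : ℝ)) (hr : (p : ℝ) - δ₀ ≤ (r : ℝ))
    (t : Fin r → ℕ) (ht2 : ∀ j, 2 ≤ t j) (htsum : ∑ j, t j = 2 * p)
    (T : ℕ) (hT : T = Finset.univ.sup t)
    (α : ℕ → ℕ) (hα : ∀ i, α i = (Finset.univ.filter fun j => T - i ≤ t j).card)
    (z : ℕ) (hz1 : ∑ i ∈ Finset.range z, α i ≤ p)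
    (hz2 : p < ∑ i ∈ Finset.range (z + 1), α i)
    (q : ℕ) (hq : q = p - ∑ i ∈ Finset.range z, α i) :
    (∏ i ∈ Finset.range z, ((T - i : ℕ) : ℝ) ^ α i) * ((T - z : ℕ) : ℝ) ^ q ≤
      2 ^ (3 * p) * max (δ₀ ^ (4 * δ₀)) 1 := by
  -- r is positive
  have hr0 : 0 < r := by
    rcases Nat.eq_zero_or_pos r with h | h
    · subst h
      simp at htsum
      have hp0 : p = 0 := by omega
      rw [hp0] at hp
      norm_num at hp
      exfalso
      linarith
    · exact h
  -- r ≤ p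
  have h2r : 2 * r ≤ 2 * p := by
    have h1 : ∑ _j : Fin r, 2 ≤ ∑ j, t j := Finset.sum_le_sum fun j _ => ht2 j
    have h2 : ∑ _j : Fin r, 2 = 2 * r := by
      simp [Finset.sum_const, Finset.card_univ, mul_comm]
    omega
  have hrp : r ≤ p := by omega
  -- T ≥ 2
  have hT2 : 2 ≤ T := by
    have j0 : Fin r := ⟨0, hr0⟩
    exact le_trans (ht2 j0) (hT ▸ Finset.le_sup (Finset.mem_univ j0))
  -- T + 2r ≤ 2p + 2
  have hTr : T + 2 * r ≤ 2 * p + 2 := by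
    obtain ⟨j1, -, hj1⟩ :=
      Finset.exists_mem_eq_sup Finset.univ ⟨⟨0, hr0⟩, Finset.mem_univ _⟩ t
    have hsplit : t j1 + ∑ j ∈ Finset.univ.erase j1, t j = 2 * p := by
      rw [Finset.add_sum_erase _ t (Finset.mem_univ j1)]; exact htsum
    have hcard : (Finset.univ.erase j1).card = r - 1 := by
      rw [Finset.card_erase_of_mem (Finset.mem_univ j1)]; simp
    have hge : 2 * (r - 1) ≤ ∑ j ∈ Finset.univ.erase j1, t j := by
      have h1 : ∑ _j ∈ Finset.univ.erase j1, 2 ≤ ∑ j ∈ Finset.univ.erase j1, t j :=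
        Finset.sum_le_sum fun j _ => ht2 j
      have h2 : ∑ _j ∈ Finset.univ.erase j1, 2 = 2 * (r - 1) := by
        simp [Finset.sum_const, hcard, mul_comm]
      omega
    have hTj : T = t j1 := hT.trans hj1
    omega
  -- key counting lemma
  have hfil : ∀ j : Fin r,
      ((Finset.range (T - 2)).filter fun i => T - i ≤ t j).card = t j - 2 := by
    intro j
    have htj : t j ≤ T := hT ▸ Finset.le_sup (Finset.mem_univ j)
    have h2j := ht2 j
    have he : ((Finset.range (T - 2)).filter fun i => T - i ≤ t j)
        = Finset.Ico (T - t j) (T - 2) := by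
      ext i
      simp only [Finset.mem_filter, Finset.mem_range, Finset.mem_Ico]
      omega
    rw [he, Nat.card_Ico]
    omega
  have hkey : ∑ i ∈ Finset.range (T - 2), α i = 2 * p - 2 * r := by
    have h1 : ∑ i ∈ Finset.range (T - 2), α i = ∑ j : Fin r, (t j - 2) := by
      calc ∑ i ∈ Finset.range (T - 2), α i
          = ∑ i ∈ Finset.range (T - 2), ∑ j : Fin r, if T - i ≤ t j then 1 else 0 := by
            simp only [hα, Finset.card_filter]
        _ = ∑ j : Fin r, ∑ i ∈ Finset.range (T - 2), if T - i ≤ t j then 1 else 0 :=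
            Finset.sum_comm
        _ = ∑ j : Fin r, (t j - 2) := by
            refine Finset.sum_congr rfl fun j _ => ?_
            rw [← Finset.card_filter]
            exact hfil j
    have h2 : ∑ j : Fin r, (t j - 2) + 2 * r = 2 * p := by
      have h3 : ∑ j : Fin r, ((t j - 2) + 2) = 2 * p := by
        rw [← htsum]; exact Finset.sum_congr rfl fun j _ => by have := ht2 j; omega
      rw [Finset.sum_add_distrib] at h3
      have h4 : ∑ _j : Fin r, 2 = 2 * r := by
        simp [Finset.sum_const, Finset.card_univ, mul_comm]
      omega
    omega
  have hSq : (∑ i ∈ Finset.range z, α i) + q = p := by omega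
  have hqz : q ≤ α z := by
    rw [Finset.sum_range_succ] at hz2
    omega
  have hT1 : (1 : ℝ) ≤ (T : ℝ) := by exact_mod_cast (by omega : 1 ≤ T)
  have h12p : (1 : ℝ) ≤ 2 ^ p := by
    calc (1 : ℝ) = 1 ^ p := (one_pow p).symm
      _ ≤ 2 ^ p := pow_le_pow_left₀ zero_le_one one_le_two p
  -- main bound : product ≤ 2^p * T^(2p-2r)
  have hmain : (∏ i ∈ Finset.range z, ((T - i : ℕ) : ℝ) ^ α i) * ((T - z : ℕ) : ℝ) ^ q
      ≤ 2 ^ p * (T : ℝ) ^ (2 * p - 2 * r) := by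
    rcases le_or_gt (z + 3) T with hcase | hcase
    · -- all factors ≤ T, total exponent p ≤ 2p-2r
      have hEp : p ≤ 2 * p - 2 * r := by
        have hmono : ∑ i ∈ Finset.range (z + 1), α i ≤ ∑ i ∈ Finset.range (T - 2), α i :=
          Finset.sum_le_sum_of_subset (Finset.range_subset_range.mpr (by omega))
        omega
      have h1 : (∏ i ∈ Finset.range z, ((T - i : ℕ) : ℝ) ^ α i)
          ≤ ∏ i ∈ Finset.range z, (T : ℝ) ^ α i := by
        apply Finset.prod_le_prod
        · intro i _; positivity
        · intro i _
          exact pow_le_pow_left₀ (by positivity) (by exact_mod_cast Nat.sub_le T i) _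
      have h2 : ((T - z : ℕ) : ℝ) ^ q ≤ (T : ℝ) ^ q :=
        pow_le_pow_left₀ (by positivity) (by exact_mod_cast Nat.sub_le T z) q
      calc (∏ i ∈ Finset.range z, ((T - i : ℕ) : ℝ) ^ α i) * ((T - z : ℕ) : ℝ) ^ q
          ≤ (∏ i ∈ Finset.range z, (T : ℝ) ^ α i) * (T : ℝ) ^ q :=
            mul_le_mul h1 h2 (by positivity) (by positivity)
        _ = (T : ℝ) ^ ((∑ i ∈ Finset.range z, α i) + q) := by
            rw [Finset.prod_pow_eq_pow_sum, ← pow_add]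
        _ = (T : ℝ) ^ p := by rw [hSq]
        _ ≤ (T : ℝ) ^ (2 * p - 2 * r) := pow_le_pow_right₀ hT1 hEp
        _ ≤ 2 ^ p * (T : ℝ) ^ (2 * p - 2 * r) :=
            le_mul_of_one_le_left (by positivity) h12p
    · -- split at T - 2
      have hsplit : (∏ i ∈ Finset.range z, ((T - i : ℕ) : ℝ) ^ α i)
          = (∏ i ∈ Finset.range (T - 2), ((T - i : ℕ) : ℝ) ^ α i) *
            ∏ i ∈ Finset.Ico (T - 2) z, ((T - i : ℕ) : ℝ) ^ α i :=
        (Finset.prod_range_mul_prod_Ico _ (by omega : T - 2 ≤ z)).symm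
      have h1 : (∏ i ∈ Finset.range (T - 2), ((T - i : ℕ) : ℝ) ^ α i)
          ≤ (T : ℝ) ^ (2 * p - 2 * r) := by
        calc (∏ i ∈ Finset.range (T - 2), ((T - i : ℕ) : ℝ) ^ α i)
            ≤ ∏ i ∈ Finset.range (T - 2), (T : ℝ) ^ α i := by
              apply Finset.prod_le_prod
              · intro i _; positivity
              · intro i _
                exact pow_le_pow_left₀ (by positivity) (by exact_mod_cast Nat.sub_le T i) _
          _ = (T : ℝ) ^ (∑ i ∈ Finset.range (T - 2), α i) :=
              Finset.prod_pow_eq_pow_sum _ _ _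
          _ = (T : ℝ) ^ (2 * p - 2 * r) := by rw [hkey]
      have h2 : (∏ i ∈ Finset.Ico (T - 2) z, ((T - i : ℕ) : ℝ) ^ α i)
          ≤ ∏ i ∈ Finset.Ico (T - 2) z, (2 : ℝ) ^ α i := by
        apply Finset.prod_le_prod
        · intro i _; positivity
        · intro i hi
          rw [Finset.mem_Ico] at hi
          exact pow_le_pow_left₀ (by positivity)
            (by exact_mod_cast (by omega : T - i ≤ 2)) _
      have h3 : ((T - z : ℕ) : ℝ) ^ q ≤ (2 : ℝ) ^ q :=
        pow_le_pow_left₀ (by positivity) (by exact_mod_cast (by omega : T - z ≤ 2)) q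
      have h5 : (∑ i ∈ Finset.Ico (T - 2) z, α i) + q ≤ p := by
        have h6 : ∑ i ∈ Finset.Ico (T - 2) z, α i ≤ ∑ i ∈ Finset.range z, α i := by
          apply Finset.sum_le_sum_of_subset
          rw [Finset.range_eq_Ico]
          exact Finset.Ico_subset_Ico (Nat.zero_le _) le_rfl
        omega
      calc (∏ i ∈ Finset.range z, ((T - i : ℕ) : ℝ) ^ α i) * ((T - z : ℕ) : ℝ) ^ q
          = (∏ i ∈ Finset.range (T - 2), ((T - i : ℕ) : ℝ) ^ α i) *
              (∏ i ∈ Finset.Ico (T - 2) z, ((T - i : ℕ) : ℝ) ^ α i) *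
              ((T - z : ℕ) : ℝ) ^ q := by rw [hsplit]
        _ ≤ ((T : ℝ) ^ (2 * p - 2 * r) * ∏ i ∈ Finset.Ico (T - 2) z, (2 : ℝ) ^ α i) *
              (2 : ℝ) ^ q := by
            apply mul_le_mul _ h3 (by positivity) (by positivity)
            exact mul_le_mul h1 h2 (by positivity) (by positivity)
        _ = (T : ℝ) ^ (2 * p - 2 * r) * (2 : ℝ) ^ ((∑ i ∈ Finset.Ico (T - 2) z, α i) + q) := by
            rw [mul_assoc, Finset.prod_pow_eq_pow_sum, ← pow_add]
        _ ≤ (T : ℝ) ^ (2 * p - 2 * r) * (2 : ℝ) ^ p := by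
            apply mul_le_mul_of_nonneg_left (pow_le_pow_right₀ one_le_two h5) (by positivity)
        _ = 2 ^ p * (T : ℝ) ^ (2 * p - 2 * r) := mul_comm _ _
  -- now the analytic part
  have hTle : (T : ℝ) ≤ 2 * δ₀ + 2 := by
    have h1 : (T : ℝ) + 2 * (r : ℝ) ≤ 2 * (p : ℝ) + 2 := by exact_mod_cast hTr
    nlinarith
  have hDle : ((2 * p - 2 * r : ℕ) : ℝ) ≤ 2 * δ₀ := by
    rw [Nat.cast_sub h2r]
    push_cast
    nlinarith
  have hb1 : (1 : ℝ) ≤ 2 * δ₀ + 2 := by nlinarith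
  have hfin : (T : ℝ) ^ (2 * p - 2 * r) ≤ 2 ^ (2 * p) * max (δ₀ ^ (4 * δ₀)) 1 := by
    have s1 : (T : ℝ) ^ (2 * p - 2 * r) ≤ (2 * δ₀ + 2) ^ (2 * p - 2 * r) :=
      pow_le_pow_left₀ (by positivity) hTle _
    have s2 : (2 * δ₀ + 2) ^ (2 * p - 2 * r : ℕ) ≤ (2 * δ₀ + 2) ^ (2 * δ₀ : ℝ) := by
      rw [← Real.rpow_natCast (2 * δ₀ + 2) (2 * p - 2 * r)]
      exact Real.rpow_le_rpow_of_exponent_le hb1 hDle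
    have s3 : (2 * δ₀ + 2 : ℝ) ^ (2 * δ₀ : ℝ) ≤ (4 * max δ₀ 1) ^ (2 * δ₀ : ℝ) := by
      apply Real.rpow_le_rpow (by positivity) ?_ (by positivity)
      rcases le_total δ₀ 1 with h | h
      · rw [max_eq_right h]; nlinarith
      · rw [max_eq_left h]; nlinarith
    have s4 : ((4 : ℝ) * max δ₀ 1) ^ (2 * δ₀ : ℝ)
        = (4 : ℝ) ^ (2 * δ₀ : ℝ) * (max δ₀ 1) ^ (2 * δ₀ : ℝ) :=
      Real.mul_rpow (by norm_num) (le_max_of_le_right zero_le_one)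
    have s5 : (4 : ℝ) ^ (2 * δ₀ : ℝ) ≤ 2 ^ (2 * p) := by
      have e1 : (2 : ℝ) ^ ((2 : ℕ) : ℝ) = 4 := by rw [Real.rpow_natCast]; norm_num
      have e2 : (4 : ℝ) ^ (2 * δ₀ : ℝ) = (2 : ℝ) ^ (4 * δ₀ : ℝ) := by
        rw [show (4 : ℝ) * δ₀ = ((2 : ℕ) : ℝ) * (2 * δ₀) by push_cast; ring,
          Real.rpow_mul (by norm_num : (0:ℝ) ≤ 2), Real.rpow_natCast]
        norm_num
      rw [e2, ← Real.rpow_natCast (2 : ℝ) (2 * p)]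
      apply Real.rpow_le_rpow_of_exponent_le one_le_two
      push_cast
      linarith
    have s6 : (max δ₀ 1 : ℝ) ^ (2 * δ₀ : ℝ) ≤ max (δ₀ ^ (4 * δ₀)) 1 := by
      rcases le_total δ₀ 1 with h | h
      · rw [max_eq_right h, Real.one_rpow]; exact le_max_right _ _
      · rw [max_eq_left h]
        exact le_max_of_le_left (Real.rpow_le_rpow_of_exponent_le h (by nlinarith))
    calc (T : ℝ) ^ (2 * p - 2 * r) ≤ (2 * δ₀ + 2) ^ (2 * δ₀ : ℝ) := s1.trans s2
      _ ≤ (4 : ℝ) ^ (2 * δ₀ : ℝ) * (max δ₀ 1) ^ (2 * δ₀ : ℝ) := by rw [← s4]; exact s3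
      _ ≤ 2 ^ (2 * p) * max (δ₀ ^ (4 * δ₀)) 1 := by
          apply mul_le_mul s5 s6 (by positivity) (by positivity)
  calc (∏ i ∈ Finset.range z, ((T - i : ℕ) : ℝ) ^ α i) * ((T - z : ℕ) : ℝ) ^ q
      ≤ 2 ^ p * (T : ℝ) ^ (2 * p - 2 * r) := hmain
    _ ≤ 2 ^ p * (2 ^ (2 * p) * max (δ₀ ^ (4 * δ₀)) 1) :=
        mul_le_mul_of_nonneg_left hfin (by positivity)
    _ = 2 ^ (3 * p) * max (δ₀ ^ (4 * δ₀)) 1 := by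
        rw [← mul_assoc, ← pow_add]
        congr 2
        ring
end

section
/- Let w be a positive integer, p ≥ 2 an integer, and ζ ∈ (0,1] real. Let A_1, …, A_p be finite sets such that any two of them are either disjoint or equal; let A*_1, …, A*_ρ be the distinct sets among them, A*_i occurring exactly l_i times. Let S_1, …, S_q be pairwise distinct sets with |S_i| = p, S_i = {s_i^{(1)}, …, s_i^{(p)}} and s_i^{(j)} ∈ A_j for all i ∈ [q], j ∈ [p]. If q ≥ 2 Σ_{ω=⌈ζp⌉}^{p} ((pw)^ω/ω!) Σ_{n_1+⋯+n_ρ = p−ω, n_i ≤ l_i} (|A*_1|^{n_1} ⋯ |A*_ρ|^{n_ρ})/(n_1! ⋯ n_ρ!), then there exist indices n_1, …, n_w such that the sets S_{n_1}, …, S_{n_w} satisfy |(⋃_{i=1}^{l−1} S_{n_i}) ∩ S_{n_l}| ≤ ζp for every l = 2, …, w. -/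
/-!
Choose the sets greedily: it suffices that for every set `T` of at most `p * w` points (the
union of the sets chosen so far) some `S i` meets `T` in fewer than `ζ * p` points. Colour each
position `j` by the class `A*_r` equal to `A j`. A set `S i` is determined by its trace on `T`,
an `ω`-subset of `T`, together with, for each colour `r`, its points outside `T` at positions of
colour `r`, an `n r`-subset of `A*_r` with `n r ≤ l r`. Bounding the binomial coefficients by
`N ^ k / k!` shows that fewer than `q` of the sets meet `T` in at least `⌈ζ p⌉` points.
-/

open Finset

noncomputable def overlapBound {σ : Type*} [Fintype σ] [DecidableEq σ] (N : ℝ) (m k : ℕ)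
    (a l : σ → ℕ) : ℝ :=
  ∑ ω ∈ Icc m k, (N ^ ω / ω.factorial) *
    ∑ n ∈ (Fintype.piFinset fun r => range (l r + 1)).filter (fun n => ∑ r, n r = k - ω),
      ∏ r, (a r : ℝ) ^ n r / (n r).factorial

theorem overlapBound_pos {σ : Type*} [Fintype σ] [DecidableEq σ] {N : ℝ} (hN : 0 < N)
    {m k : ℕ} (hmk : m ≤ k) (a l : σ → ℕ) : 0 < overlapBound N m k a l := by
  unfold overlapBound
  refine sum_pos' (fun ω _ => by positivity) ⟨k, mem_Icc.2 ⟨hmk, le_rfl⟩, ?_⟩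
  refine mul_pos (by positivity) (sum_pos' (fun n _ => by positivity) ⟨0, ?_, by simp⟩)
  simp

section ColourPart

variable {γ κ σ : Type*} [DecidableEq γ] [Fintype κ] [DecidableEq σ]

def colourPart (c : κ → σ) (t : κ → γ) (T : Finset γ) (r : σ) : Finset γ :=
  ({j | c j = r ∧ t j ∉ T} : Finset κ).image t

variable {c : κ → σ} {t : κ → γ} {T : Finset γ}

theorem colourPart_subset {X : σ → Finset γ} (ht : ∀ j, t j ∈ X (c j)) (r : σ) :
    colourPart c t T r ⊆ X r := by
  simp only [colourPart, subset_iff, mem_image, mem_filter_univ]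
  rintro _ ⟨j, ⟨rfl, -⟩, rfl⟩
  exact ht j

theorem card_colourPart_le (r : σ) : #(colourPart c t T r) ≤ #{j | c j = r} :=
  card_image_le.trans <| card_le_card fun j => by simp +contextual

theorem pairwiseDisjoint_colourPart (ht : Function.Injective t) :
    (Set.univ : Set σ).PairwiseDisjoint (colourPart c t T) := by
  rintro r - r' - hrr'
  simp only [Function.onFun, colourPart, disjoint_left, mem_image, mem_filter_univ]
  rintro _ ⟨j, ⟨rfl, -⟩, rfl⟩ ⟨j', ⟨rfl, -⟩, hjj'⟩
  exact hrr' (congrArg c (ht hjj')).symm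

variable [Fintype σ]

theorem biUnion_colourPart : univ.biUnion (colourPart c t T) = univ.image t \ T := by
  ext x
  simp only [colourPart, mem_biUnion, mem_image, mem_filter_univ, mem_sdiff, mem_univ, true_and]
  constructor
  · rintro ⟨r, j, ⟨-, hj⟩, rfl⟩
    exact ⟨⟨j, rfl⟩, hj⟩
  · rintro ⟨⟨j, rfl⟩, hj⟩
    exact ⟨c j, j, ⟨rfl, hj⟩, rfl⟩

theorem sum_card_colourPart_add_card_inter (ht : Function.Injective t) :
    ∑ r, #(colourPart c t T r) + #(univ.image t ∩ T) = Fintype.card κ := by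
  rw [← card_biUnion (by simpa using pairwiseDisjoint_colourPart ht), biUnion_colourPart,
    card_sdiff_add_card_inter, card_image_of_injective _ ht, card_univ]

theorem biUnion_colourPart_union_inter :
    univ.biUnion (colourPart c t T) ∪ univ.image t ∩ T = univ.image t := by
  rw [biUnion_colourPart, sdiff_union_inter]

end ColourPart

section Counting

variable {ι γ κ σ : Type*} [Fintype ι] [DecidableEq γ] [Fintype κ] [Fintype σ]
  [DecidableEq σ] {c : κ → σ} {s : ι → κ → γ} {X : σ → Finset γ}

theorem card_filter_colourProfile_le (hinj : Function.Injective fun i => univ.image (s i))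
    (hX : ∀ i j, s i j ∈ X (c j)) (T : Finset γ) (ω : ℕ) (n : σ → ℕ) :
    #{i | #(univ.image (s i) ∩ T) = ω ∧ (fun r => #(colourPart c (s i) T r)) = n}
      ≤ (#T).choose ω * ∏ r, (#(X r)).choose (n r) := by
  calc _ ≤ #(T.powersetCard ω ×ˢ Fintype.piFinset fun r => (X r).powersetCard (n r)) := by
        refine card_le_card_of_injOn (fun i => (univ.image (s i) ∩ T, colourPart c (s i) T))
          (fun i hi => ?_) (fun i _ i' _ hii' => hinj ?_)
        · rw [mem_coe, mem_filter_univ] at hi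
          simp only [mem_coe, mem_product, mem_powersetCard, Fintype.mem_piFinset]
          exact ⟨⟨inter_subset_right, hi.1⟩,
            fun r => ⟨colourPart_subset (hX i) r, congrFun hi.2 r⟩⟩
        · simp only [Prod.mk.injEq] at hii'
          dsimp only
          rw [← biUnion_colourPart_union_inter (c := c) (t := s i) (T := T),
            ← biUnion_colourPart_union_inter (c := c) (t := s i') (T := T), hii'.1, hii'.2]
    _ = _ := by simp only [card_product, card_powersetCard, Fintype.card_piFinset]

theorem card_filter_le_card_inter_le_sum_choose (ht : ∀ i, Function.Injective (s i))
    (hinj : Function.Injective fun i => univ.image (s i)) (hX : ∀ i j, s i j ∈ X (c j))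
    {l : σ → ℕ} (hl : ∀ r, #{j | c j = r} ≤ l r) (T : Finset γ) (m : ℕ) :
    #{i | m ≤ #(univ.image (s i) ∩ T)} ≤
      ∑ ω ∈ Icc m (Fintype.card κ),
        ∑ n ∈ (Fintype.piFinset fun r => range (l r + 1)).filter
            (fun n => ∑ r, n r = Fintype.card κ - ω),
          (#T).choose ω * ∏ r, (#(X r)).choose (n r) := by
  rw [card_eq_sum_card_fiberwise (f := fun i => #(univ.image (s i) ∩ T)) (t := Icc m _)]
  · gcongr with ω
    rw [card_eq_sum_card_fiberwise (f := fun i r => #(colourPart c (s i) T r))]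
    · gcongr with n
      refine (card_le_card fun i hi => ?_).trans (card_filter_colourProfile_le hinj hX T ω n)
      simp only [mem_filter, mem_univ, true_and] at hi ⊢
      exact ⟨hi.1.2, hi.2⟩
    · intro i hi
      simp only [mem_coe, mem_filter, Fintype.mem_piFinset, mem_range] at hi ⊢
      have := sum_card_colourPart_add_card_inter (c := c) (T := T) (ht i)
      exact ⟨fun r => Nat.lt_succ_of_le ((card_colourPart_le r).trans (hl r)), by omega⟩
  · intro i hi
    rw [mem_coe, mem_filter_univ] at hi
    rw [mem_coe, mem_Icc]
    refine ⟨hi, (card_le_card inter_subset_left).trans ?_⟩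
    exact card_image_le.trans (card_univ (α := κ)).le

theorem card_filter_le_card_inter_le_overlapBound (ht : ∀ i, Function.Injective (s i))
    (hinj : Function.Injective fun i => univ.image (s i)) (hX : ∀ i j, s i j ∈ X (c j))
    {l : σ → ℕ} (hl : ∀ r, #{j | c j = r} ≤ l r) {T : Finset γ} {N : ℝ}
    (hT : (#T : ℝ) ≤ N) (m : ℕ) :
    (#{i | m ≤ #(univ.image (s i) ∩ T)} : ℝ) ≤
      overlapBound N m (Fintype.card κ) (fun r => #(X r)) l := by
  refine (Nat.cast_le.2 (card_filter_le_card_inter_le_sum_choose ht hinj hX hl T m)).trans ?_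
  have hN : 0 ≤ N := (Nat.cast_nonneg _).trans hT
  push_cast
  simp_rw [overlapBound, mul_sum]
  gcongr with ω _ n _ r
  · exact (Nat.choose_le_pow_div (α := ℝ) ω #T).trans (by gcongr)
  · exact Nat.choose_le_pow_div _ _

end Counting

theorem exists_fin_seq_card_biUnion_Iio_inter_le {ι γ : Type*} [DecidableEq γ]
    (S : ι → Finset γ) {c : ℕ} (hS : ∀ i, #(S i) ≤ c) {b : ℝ} :
    ∀ w : ℕ, (∀ T : Finset γ, #T ≤ c * w → ∃ i, (#(S i ∩ T) : ℝ) ≤ b) →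
      ∃ ν : Fin w → ι, ∀ L,
        (#((Iio L).biUnion (fun k => S (ν k)) ∩ S (ν L)) : ℝ) ≤ b
  | 0, _ => ⟨Fin.elim0, fun L => L.elim0⟩
  | w + 1, h => by
    obtain ⟨ν, hν⟩ := exists_fin_seq_card_biUnion_Iio_inter_le S hS w fun T hT =>
      h T (hT.trans (Nat.mul_le_mul_left c w.le_succ))
    have hcard : #(univ.biUnion (S ∘ ν)) ≤ c * (w + 1) :=
      calc #(univ.biUnion (S ∘ ν)) ≤ ∑ k, #(S (ν k)) := card_biUnion_le
        _ ≤ ∑ _k : Fin w, c := sum_le_sum fun k _ => hS (ν k)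
        _ = c * w := by simp [mul_comm]
        _ ≤ c * (w + 1) := Nat.mul_le_mul_left c w.le_succ
    obtain ⟨i, hi⟩ := h _ hcard
    refine ⟨Fin.snoc ν i, Fin.lastCases ?_ fun L => ?_⟩
    · rw [Fin.Iio_last_eq_map, map_eq_image, image_biUnion, Fin.snoc_last, inter_comm]
      simpa only [Function.comp_def, Fin.coe_castSuccEmb, Fin.snoc_castSucc] using hi
    · rw [Fin.Iio_castSucc, map_eq_image, image_biUnion, Fin.snoc_castSucc]
      simpa only [Function.comp_def, Fin.coe_castSuccEmb, Fin.snoc_castSucc] using hν L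

theorem stmt13_general {γ : Type*} [DecidableEq γ] (w : ℕ) (hw : 0 < w) (p : ℕ) (hp : 2 ≤ p)
    (ζ : ℝ) (hζ1 : ζ ≤ 1)
    (A : Fin p → Finset γ)
    (ρ : ℕ) (Ast : Fin ρ → Finset γ)
    (hAstAll : ∀ j, ∃ i, A j = Ast i)
    (l : Fin ρ → ℕ)
    (hl : ∀ i, l i = (Finset.univ.filter fun j => A j = Ast i).card)
    (q : ℕ) (S : Fin q → Finset γ) (hSinj : Function.Injective S)
    (hScard : ∀ i, (S i).card = p)
    (s : Fin q → Fin p → γ)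
    (hs : ∀ i, S i = Finset.image (s i) Finset.univ)
    (hsA : ∀ i j, s i j ∈ A j)
    (hq : 2 * ∑ ω ∈ Finset.Icc ⌈ζ * p⌉₊ p,
          ((p * w : ℝ) ^ ω / ω.factorial) *
            ∑ nn ∈ (Fintype.piFinset fun i => Finset.range (l i + 1)).filter
                (fun nn => ∑ i, nn i = p - ω),
              ∏ i, ((Ast i).card : ℝ) ^ nn i / (nn i).factorial
        ≤ (q : ℝ)) :
    ∃ ν : Fin w → Fin q, ∀ L : Fin w, 1 ≤ (L : ℕ) →
      ((((Finset.univ.filter fun i => i < L).biUnion fun i => S (ν i)) ∩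
          S (ν L)).card : ℝ) ≤ ζ * p := by
  choose f hf using hAstAll
  have hfl : ∀ r, #{j | f j = r} ≤ l r := fun r =>
    (hl r).symm ▸ card_le_card fun j => by simp +contextual [hf]
  have hsinj : ∀ i, Function.Injective (s i) := fun i => by
    rw [← Set.injOn_univ, ← coe_univ]
    exact injOn_of_card_image_eq (by rw [← hs i, hScard i, card_univ, Fintype.card_fin])
  obtain rfl : S = fun i => univ.image (s i) := funext hs
  change 2 * overlapBound (p * w) ⌈ζ * p⌉₊ p (fun r => #(Ast r)) l ≤ q at hq
  have hB : 0 < overlapBound (p * w) ⌈ζ * p⌉₊ p (fun r => #(Ast r)) l :=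
    overlapBound_pos (by positivity) (Nat.ceil_le.2 (by nlinarith)) _ _
  have hgood : ∀ T : Finset γ, #T ≤ p * w →
      ∃ i, (#(univ.image (s i) ∩ T) : ℝ) ≤ ζ * p := by
    intro T hT
    by_contra! hbad
    have hcount := card_filter_le_card_inter_le_overlapBound (c := f) (X := Ast) hsinj hSinj
      (fun i j => hf j ▸ hsA i j) hfl (N := p * w) (by exact_mod_cast hT) ⌈ζ * p⌉₊
    rw [card_filter_eq_iff.2 fun i _ => Nat.ceil_le.2 (hbad i).le] at hcount
    simp only [card_univ, Fintype.card_fin] at hcount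
    linarith
  obtain ⟨ν, hν⟩ :=
    exists_fin_seq_card_biUnion_Iio_inter_le _ (fun i => (hScard i).le) w hgood
  exact ⟨ν, fun L _ => by simpa only [filter_gt_eq_Iio] using hν L⟩

theorem stmt13 {γ : Type*} [DecidableEq γ] (w : ℕ) (hw : 0 < w) (p : ℕ) (hp : 2 ≤ p)
    (ζ : ℝ) (hζ0 : 0 < ζ) (hζ1 : ζ ≤ 1)
    (A : Fin p → Finset γ)
    (hA : ∀ i j, A i = A j ∨ Disjoint (A i) (A j))
    (ρ : ℕ) (Ast : Fin ρ → Finset γ) (hAstInj : Function.Injective Ast)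
    (hAstAll : ∀ j, ∃ i, A j = Ast i)
    (l : Fin ρ → ℕ)
    (hl : ∀ i, l i = (Finset.univ.filter fun j => A j = Ast i).card)
    (q : ℕ) (S : Fin q → Finset γ) (hSinj : Function.Injective S)
    (hScard : ∀ i, (S i).card = p)
    (s : Fin q → Fin p → γ)
    (hs : ∀ i, S i = Finset.image (s i) Finset.univ)
    (hsA : ∀ i j, s i j ∈ A j)
    (hq : 2 * ∑ ω ∈ Finset.Icc ⌈ζ * p⌉₊ p,
          ((p * w : ℝ) ^ ω / ω.factorial) *
            ∑ nn ∈ (Fintype.piFinset fun i => Finset.range (l i + 1)).filter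
                (fun nn => ∑ i, nn i = p - ω),
              ∏ i, ((Ast i).card : ℝ) ^ nn i / (nn i).factorial
        ≤ (q : ℝ)) :
    ∃ ν : Fin w → Fin q, ∀ L : Fin w, 1 ≤ (L : ℕ) →
      ((((Finset.univ.filter fun i => i < L).biUnion fun i => S (ν i)) ∩
          S (ν L)).card : ℝ) ≤ ζ * p :=
  stmt13_general w hw p hp ζ hζ1 A ρ Ast hAstAll l hl q S hSinj hScard s hs hsA hq
end

section
/- Let G be a finite abelian group with |G| = N, let δ, α be real numbers with 0 < α ≤ δ, let A ⊆ G with |A| = δN, let k ≥ 2 be an integer, and let R_α = { r ∈ Ĝ : |Â(r)| ≥ αN } where Â(r) = Σ_{x∈A} e(−r·x) is the Fourier transform with respect to the characters of G. Then for any set B ⊆ R_α one has T_k(B) ≥ (δ α^{2k} / δ^{2k}) · |B|^{2k}. -/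
open Finset

/-- The Fourier transform of (the indicator of) `A ⊆ G` at a character `ψ` of `G`:
`Â(ψ) = ∑_{x ∈ A} e(−ψ·x)`. -/
noncomputable def fourierChar {G : Type*} [AddCommGroup G] [Fintype G]
    (A : Finset G) (ψ : AddChar G ℂ) : ℂ :=
  ∑ x ∈ A, ψ (-x)

/-- `T_k(B)` for a set `B` of characters: the number of `2k`-tuples
`(r_1,…,r_k,r'_1,…,r'_k) ∈ B^{2k}` with `r_1+⋯+r_k = r'_1+⋯+r'_k` in the dual group
(written multiplicatively on characters). -/
noncomputable def TkChar {G : Type*} [AddCommGroup G] [Fintype G]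
    (k : ℕ) (B : Set (AddChar G ℂ)) : ℕ :=
  Set.ncard {v : (Fin k → AddChar G ℂ) × (Fin k → AddChar G ℂ) |
    (∀ i, v.1 i ∈ B) ∧ (∀ i, v.2 i ∈ B) ∧ ∏ i, v.1 i = ∏ i, v.2 i}

/-!
Choose unimodular weights `c r` with `c r * Â(r) = |Â(r)|` and put `F = ∑_{r ∈ B} c r • r`.
Then `∑_{r ∈ B} |Â(r)| = ∑_{x ∈ A} F(-x)`, Hölder bounds the `2k`-th power of this by
`|A|^{2k-1} ∑_x |F(x)|^{2k}`, and expanding `F^k` as a sum over `B^k` and using the orthogonality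
of characters bounds `∑_x |F(x)|^{2k}` by `N · T_k(B)`. Since `|A| = δN` and
`∑_{r ∈ B} |Â(r)| ≥ αN|B|`, this is the claim.
-/

open Complex in
lemma Complex.exp_neg_arg_mul_I_mul_self (z : ℂ) : exp (-(arg z * I)) * z = ‖z‖ :=
  calc exp (-(arg z * I)) * z = exp (-(arg z * I)) * (‖z‖ * exp (arg z * I)) := by
        rw [norm_mul_exp_arg_mul_I]
    _ = ‖z‖ := by rw [mul_left_comm, ← exp_add, neg_add_cancel, exp_zero, mul_one]

lemma sum_mul_addChar_pow {G R : Type*} [AddMonoid G] [CommSemiring R]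
    (B : Finset (AddChar G R)) (c : AddChar G R → R) (k : ℕ) (x : G) :
    (∑ r ∈ B, c r * r x) ^ k =
      ∑ p ∈ Fintype.piFinset fun _ : Fin k => B, (∏ i, c (p i)) * (∏ i, p i) x := by
  rw [← Fin.prod_const, prod_univ_sum]
  simp_rw [prod_mul_distrib, AddChar.prod_apply]

namespace AddChar

variable {G : Type*} [AddCommGroup G] [Fintype G]

lemma sum_apply_mul_conj_apply [DecidableEq (AddChar G ℂ)] (ψ φ : AddChar G ℂ) :
    ∑ x, ψ x * starRingEnd ℂ (φ x) = if ψ = φ then (Fintype.card G : ℂ) else 0 := by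
  simp_rw [← inv_apply_eq_conj, ← inv_apply', ← mul_apply, sum_eq_ite]
  -- the trivial character `0` is `1` for the multiplicative structure on `AddChar G ℂ`
  exact if_congr (mul_inv_eq_one (a := ψ)) rfl rfl

end AddChar

section

variable {G : Type*} [AddCommGroup G] [Fintype G]

lemma sum_norm_sq_sum_mul_addChar {ι : Type*} [DecidableEq (AddChar G ℂ)] (s : Finset ι)
    (a : ι → ℂ) (χ : ι → AddChar G ℂ) :
    ((∑ x, ‖∑ i ∈ s, a i * χ i x‖ ^ 2 : ℝ) : ℂ) =
      Fintype.card G * ∑ v ∈ s ×ˢ s with χ v.1 = χ v.2, a v.1 * starRingEnd ℂ (a v.2) := by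
  push_cast
  simp_rw [← Complex.mul_conj', map_sum, map_mul, sum_mul_sum]
  rw [sum_filter, sum_product, mul_sum, sum_comm]
  refine sum_congr rfl fun i _ => ?_
  rw [sum_comm, mul_sum]
  refine sum_congr rfl fun j _ => ?_
  calc ∑ x, a i * χ i x * (starRingEnd ℂ (a j) * starRingEnd ℂ (χ j x))
      = a i * starRingEnd ℂ (a j) * ∑ x, χ i x * starRingEnd ℂ (χ j x) := by
        rw [mul_sum]; exact sum_congr rfl fun x _ => by ring
    _ = _ := by rw [AddChar.sum_apply_mul_conj_apply]; split_ifs <;> ring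

lemma sum_norm_sq_sum_mul_addChar_le {ι : Type*} [DecidableEq (AddChar G ℂ)] (s : Finset ι)
    (a : ι → ℂ) (χ : ι → AddChar G ℂ) (ha : ∀ i ∈ s, ‖a i‖ ≤ 1) :
    ∑ x, ‖∑ i ∈ s, a i * χ i x‖ ^ 2 ≤ Fintype.card G * #{v ∈ s ×ˢ s | χ v.1 = χ v.2} := by
  have hnorm : ∀ v ∈ s ×ˢ s, ‖a v.1 * starRingEnd ℂ (a v.2)‖ ≤ 1 := fun v hv => by
    obtain ⟨h1, h2⟩ := mem_product.1 hv
    rw [norm_mul, Complex.norm_conj]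
    exact mul_le_one₀ (ha _ h1) (norm_nonneg _) (ha _ h2)
  calc ∑ x, ‖∑ i ∈ s, a i * χ i x‖ ^ 2
      = ‖((∑ x, ‖∑ i ∈ s, a i * χ i x‖ ^ 2 : ℝ) : ℂ)‖ := by
        rw [Complex.norm_real, Real.norm_of_nonneg (by positivity)]
    _ ≤ Fintype.card G * ∑ v ∈ s ×ˢ s with χ v.1 = χ v.2, ‖a v.1 * starRingEnd ℂ (a v.2)‖ := by
        rw [sum_norm_sq_sum_mul_addChar, norm_mul, Complex.norm_natCast]
        gcongr
        exact norm_sum_le _ _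
    _ ≤ Fintype.card G * #{v ∈ s ×ˢ s | χ v.1 = χ v.2} := by
        gcongr
        exact (sum_le_card_nsmul _ _ 1 fun v hv => hnorm v (mem_filter.1 hv).1).trans_eq
          (by simp)

lemma TkChar_coe_finset [DecidableEq (AddChar G ℂ)] (k : ℕ) (B : Finset (AddChar G ℂ)) :
    TkChar k (B : Set (AddChar G ℂ)) =
      #{v ∈ Fintype.piFinset (fun _ : Fin k => B) ×ˢ Fintype.piFinset (fun _ : Fin k => B) |
        ∏ i, v.1 i = ∏ i, v.2 i} := by
  rw [TkChar, ← Set.ncard_coe_finset]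
  congr 1
  ext v
  simp [and_assoc]

lemma sum_norm_pow_le_card_mul_TkChar (B : Finset (AddChar G ℂ)) (c : AddChar G ℂ → ℂ)
    (hc : ∀ r ∈ B, ‖c r‖ ≤ 1) (k : ℕ) :
    ∑ x, ‖∑ r ∈ B, c r * r x‖ ^ (2 * k) ≤ Fintype.card G * TkChar k (B : Set (AddChar G ℂ)) := by
  classical
  simp_rw [pow_mul', ← norm_pow _ k, sum_mul_addChar_pow, TkChar_coe_finset]
  refine sum_norm_sq_sum_mul_addChar_le _ _ _ fun p hp => ?_
  rw [norm_prod]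
  exact prod_le_one (fun _ _ => norm_nonneg _) fun i _ => hc _ (Fintype.mem_piFinset.1 hp i)

lemma sum_norm_fourierChar_le (A : Finset G) (B : Finset (AddChar G ℂ)) (c : AddChar G ℂ → ℂ)
    (hc : ∀ r ∈ B, c r * fourierChar A r = ‖fourierChar A r‖) :
    ∑ r ∈ B, ‖fourierChar A r‖ ≤ ∑ x ∈ A, ‖∑ r ∈ B, c r * r (-x)‖ :=
  calc ∑ r ∈ B, ‖fourierChar A r‖
      = ‖∑ x ∈ A, ∑ r ∈ B, c r * r (-x)‖ := by
        have hsum : ∑ r ∈ B, ∑ x ∈ A, c r * r (-x) = ((∑ r ∈ B, ‖fourierChar A r‖ : ℝ) : ℂ) := by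
          push_cast
          exact sum_congr rfl fun r hr => by rw [← mul_sum, ← hc r hr, fourierChar]
        rw [sum_comm, hsum, Complex.norm_real, Real.norm_of_nonneg (by positivity)]
    _ ≤ ∑ x ∈ A, ‖∑ r ∈ B, c r * r (-x)‖ := norm_sum_le _ _

theorem sum_norm_fourierChar_pow_le (A : Finset G) (B : Finset (AddChar G ℂ)) {k : ℕ}
    (hk : k ≠ 0) :
    (∑ r ∈ B, ‖fourierChar A r‖) ^ (2 * k) ≤
      #A ^ (2 * k - 1) * (Fintype.card G * TkChar k (B : Set (AddChar G ℂ))) := by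
  set c : AddChar G ℂ → ℂ := fun r => Complex.exp (-(Complex.arg (fourierChar A r) * Complex.I))
  have hc : ∀ r ∈ B, ‖c r‖ ≤ 1 := fun r _ => by simp [c, Complex.norm_exp]
  set F : G → ℝ := fun x => ‖∑ r ∈ B, c r * r x‖
  have hm : 2 * k = 2 * k - 1 + 1 := by omega
  calc (∑ r ∈ B, ‖fourierChar A r‖) ^ (2 * k)
      ≤ (∑ x ∈ A, F (-x)) ^ (2 * k) := by
        gcongr
        exact sum_norm_fourierChar_le A B c fun r _ => Complex.exp_neg_arg_mul_I_mul_self _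
    _ ≤ #A ^ (2 * k - 1) * ∑ x ∈ A, F (-x) ^ (2 * k) := by
        rw [hm]
        exact pow_sum_le_card_mul_sum_pow (fun _ _ => norm_nonneg _) _
    _ ≤ #A ^ (2 * k - 1) * ∑ x, F x ^ (2 * k) := by
        gcongr
        exact (sum_le_sum_of_subset_of_nonneg (subset_univ A) fun _ _ _ => by positivity).trans_eq
          (Fintype.sum_equiv (Equiv.neg G) _ _ fun _ => rfl)
    _ ≤ #A ^ (2 * k - 1) * (Fintype.card G * TkChar k (B : Set (AddChar G ℂ))) := by
        gcongr
        exact sum_norm_pow_le_card_mul_TkChar B c hc k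

end

theorem stmt18_general {G : Type*} [AddCommGroup G] [Fintype G]
    (δ α : ℝ) (hα : 0 < α)
    (A : Finset G) (hA : (A.card : ℝ) = δ * Fintype.card G)
    (k : ℕ) (hk : 2 ≤ k)
    (B : Set (AddChar G ℂ))
    (hB : ∀ ψ ∈ B, α * Fintype.card G ≤ ‖fourierChar A ψ‖) :
    δ * α ^ (2 * k) / δ ^ (2 * k) * (B.ncard : ℝ) ^ (2 * k) ≤ (TkChar k B : ℝ) := by
  obtain ⟨B, rfl⟩ := B.toFinite.exists_finset_coe
  rw [Set.ncard_coe_finset]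
  set N : ℝ := (Fintype.card G : ℝ)
  have hN : 0 < N := Nat.cast_pos.2 Fintype.card_pos
  have hδN : 0 ≤ δ * N := hA ▸ Nat.cast_nonneg _
  obtain rfl | hδ := (nonneg_of_mul_nonneg_left hδN hN).eq_or_lt
  · simp -- the left side is `0 * α ^ (2 * k) / 0 = 0`
  have hlower : α * N * #B ≤ ∑ r ∈ B, ‖fourierChar A r‖ := by
    rw [mul_comm, ← nsmul_eq_mul]
    exact card_nsmul_le_sum _ _ _ hB
  have key := (pow_le_pow_left₀ (by positivity) hlower (2 * k)).trans
    (sum_norm_fourierChar_pow_le A B (by omega : k ≠ 0))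
  obtain ⟨n, hn⟩ : ∃ n, 2 * k = n + 1 := ⟨2 * k - 1, by omega⟩
  rw [hA, hn, Nat.add_sub_cancel] at key
  rw [hn, pow_succ' δ, mul_div_mul_left _ _ hδ.ne', div_mul_eq_mul_div, div_le_iff₀ (by positivity)]
  refine le_of_mul_le_mul_right ?_ (pow_pos hN (n + 1))
  calc α ^ (n + 1) * #B ^ (n + 1) * N ^ (n + 1) = (α * N * #B) ^ (n + 1) := by ring
    _ ≤ (δ * N) ^ n * (N * TkChar k (B : Set (AddChar G ℂ))) := key
    _ = TkChar k (B : Set (AddChar G ℂ)) * δ ^ n * N ^ (n + 1) := by ring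

theorem stmt18 {G : Type*} [AddCommGroup G] [Fintype G]
    (δ α : ℝ) (hα : 0 < α) (hαδ : α ≤ δ)
    (A : Finset G) (hA : (A.card : ℝ) = δ * Fintype.card G)
    (k : ℕ) (hk : 2 ≤ k)
    (B : Set (AddChar G ℂ))
    (hB : ∀ ψ ∈ B, α * Fintype.card G ≤ ‖fourierChar A ψ‖) :
    δ * α ^ (2 * k) / δ ^ (2 * k) * (B.ncard : ℝ) ^ (2 * k) ≤ (TkChar k B : ℝ) :=
  stmt18_general δ α hα A hA k hk B hB
end
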